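/- arXiv:2408.15228 — 3 statements merged into one kernel-verified Lean document; each statement's English description precedes it below -/
import Mathlib

section
/- Let G, H be finite graphs with H triangle-free, and let ⊐ ⊆ H × G be edge-preserving. If ⊐ is star-refining and edge-surjective, then ⊐ is edge-witnessing. -/
def EdgePreserving {G : Type*} {H : Type*} (sqG : G → G → Prop) (sqH : H → H → Prop)
    (R : H → G → Prop) : Prop :=
  ∀ h g g' h', R h g → sqG g g' → R h' g' → sqH h h'

def EdgeSurjective {G : Type*} {H : Type*} (sqG : G → G → Prop) (sqH : H → H → Prop)
    (R : H → G → Prop) : Prop :=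
  ∀ h h', sqH h h' → ∃ g g', R h g ∧ sqG g g' ∧ R h' g'

def EdgeWitnessing {G : Type*} {H : Type*} (sqH : H → H → Prop) (R : H → G → Prop) : Prop :=
  ∀ h h', sqH h h' → ∃ g, R h g ∧ R h' g

def CoSurjective {G : Type*} {H : Type*} (R : H → G → Prop) : Prop :=
  ∀ g, ∃ h, R h g

def CoInjective {G : Type*} {H : Type*} (R : H → G → Prop) : Prop :=
  ∀ h, ∃ g, {h' | R h' g} = {h}

def RelSurjective {G : Type*} {H : Type*} (R : H → G → Prop) : Prop :=
  ∀ h, ∃ g, R h g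

def StarRefining {G : Type*} {H : Type*} (sqG : G → G → Prop) (R : H → G → Prop) : Prop :=
  ∀ g, ∃ h, ∀ g', sqG g' g → R h g'

def CoEdgeWitnessing {G : Type*} {H : Type*} (sqG : G → G → Prop) (R : H → G → Prop) : Prop :=
  ∀ f g, sqG f g → ∃ h, R h f ∧ R h g

def AntiInjective {G : Type*} {H : Type*} (R : H → G → Prop) : Prop :=
  ∀ h, ∃ g g', g ≠ g' ∧ R h g ∧ R h g'

def RelComp {A : Type*} {B : Type*} {C : Type*} (R : A → B → Prop) (S : B → C → Prop) :
    A → C → Prop :=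
  fun a c => ∃ b, R a b ∧ S b c

def IsConn {V : Type*} (sq : V → V → Prop) (C : Set V) : Prop :=
  ∀ A B : Set V, A ∪ B = C → Disjoint A B → A.Nonempty → B.Nonempty →
    ∃ a ∈ A, ∃ b ∈ B, sq a b

def Preim {G : Type*} {H : Type*} (R : H → G → Prop) (C : Set H) : Set G :=
  {g | ∃ h ∈ C, R h g}

def Img {G : Type*} {H : Type*} (R : H → G → Prop) (C : Set G) : Set H :=
  {h | ∃ g ∈ C, R h g}

def RelMonotone {G : Type*} {H : Type*} (sqG : G → G → Prop) (sqH : H → H → Prop)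
    (R : H → G → Prop) : Prop :=
  ∀ C : Set H, IsConn sqH C → IsConn sqG (Preim R C)

def TriangleFree {V : Type*} (sq : V → V → Prop) : Prop :=
  ∀ a b c : V, a ≠ b → b ≠ c → a ≠ c → sq a b → sq b c → sq a c → False

def simpleOf {V : Type*} (sq : V → V → Prop) (hsym : ∀ a b, sq a b → sq b a) :
    SimpleGraph V where
  Adj a b := a ≠ b ∧ sq a b
  symm := by
    refine ⟨fun a b h => ?_⟩
    exact ⟨Ne.symm h.1, hsym a b h.2⟩
  loopless := by
    refine ⟨fun a h => ?_⟩
    exact h.1 rfl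

def IsCliqueSet {V : Type*} (sq : V → V → Prop) (C : Set V) : Prop :=
  C.Nonempty ∧ ∀ a ∈ C, ∀ b ∈ C, sq a b

def IsPathGraph {V : Type*} (sq : V → V → Prop) : Prop :=
  IsConn sq Set.univ ∧ (∀ v : V, {w | w ≠ v ∧ sq v w}.ncard ≤ 2) ∧
    ∃ v : V, {w | w ≠ v ∧ sq v w}.ncard ≤ 1

def EdgeReflective {A : Type*} {B : Type*} (sqA : A → A → Prop) (sqB : B → B → Prop)
    (R : A → B → Prop) : Prop :=
  ∀ a a', a ≠ a' → sqA a a' →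
    ∃ b b', ({x | R x b} = {a}) ∧ R a' b' ∧ sqB b b' ∧
      ∀ c c', ({x | R x c} = {a}) → R a' c' → sqB c c' → c = b ∧ c' = b'

theorem stmt_6 {G H : Type*}
    [Finite G] [Nonempty G] [Finite H] [Nonempty H]
    (sqG : G → G → Prop) (sqH : H → H → Prop)
    (hGr : ∀ g, sqG g g) (hGs : ∀ a b, sqG a b → sqG b a)
    (hHr : ∀ h, sqH h h) (hHs : ∀ a b, sqH a b → sqH b a)
    (htf : TriangleFree sqH)
    (R : H → G → Prop) (hep : EdgePreserving sqG sqH R)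
    (hst : StarRefining sqG R) (hes : EdgeSurjective sqG sqH R) :
    EdgeWitnessing sqH R := by
  intro h h' hhh
  obtain ⟨g, g', hRg, hgg, hRg'⟩ := hes h h' hhh
  obtain ⟨k, hk⟩ := hst g
  have hkg : R k g := hk g (hGr g)
  have hkg' : R k g' := hk g' (hGs g g' hgg)
  by_cases hhk : h = k
  · exact ⟨g', hhk ▸ hkg', hRg'⟩
  by_cases hh'k : h' = k
  · exact ⟨g, hRg, hh'k ▸ hkg⟩
  by_cases hhh' : h = h'
  · exact ⟨g, hRg, hhh' ▸ hRg⟩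
  have h1 : sqH h k := hep h g g' k hRg hgg hkg'
  have h2 : sqH k h' := hep k g g' h' hkg hgg hRg'
  exact (htf h k h' hhk (fun e => hh'k e.symm) hhh' h1 h2 hhh).elim
end

section
/- Let P, Q, R be finite paths and let ⊐ ⊆ R × P and ⊨ ⊆ R × Q be edge-preserving, co-bijective and monotone. Then t_⊐(C) ≤ t_⊨(C) for every clique C of R if and only if there exists an edge-preserving, co-bijective and monotone relation ⊣ ⊆ P × Q with ⊐ ∘ ⊣ = ⊨ (where r (⊐∘⊣) q iff ∃p, r ⊐ p and p ⊣ q). -/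
section Interval
variable {V : Type*} {n : ℕ} (e : Fin n ≃ V) (sq : V → V → Prop)

def IsIntervalIdx (S : Set V) : Prop :=
  ∀ a b c : Fin n, a ≤ b → b ≤ c → e a ∈ S → e c ∈ S → e b ∈ S

theorem conn_of_interval
    (hadj : ∀ i j : Fin n, sq (e i) (e j) ↔ i.val ≤ j.val + 1 ∧ j.val ≤ i.val + 1)
    (hsym : ∀ a b, sq a b → sq b a)
    (S : Set V) (hS : IsIntervalIdx e S) : IsConn sq S := by
  classical
  intro A B hAB hdisj ⟨a, ha⟩ ⟨b, hb⟩
  have key : ∀ (X Y : Set V), X ∪ Y = S → ∀ x ∈ X, ∀ y ∈ Y, x ∉ Y →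
      (e.symm x).val < (e.symm y).val → ∃ u ∈ X, ∃ v ∈ Y, sq u v := by
    intro X Y hXY x hx y hy hxY hlt
    have hxS : x ∈ S := hXY ▸ Set.mem_union_left Y hx
    have hyS : y ∈ S := hXY ▸ Set.mem_union_right X hy
    set P : ℕ → Prop := fun t => (e.symm x).val < t ∧ ∃ h : t < n, e ⟨t, h⟩ ∈ Y with hP
    have hPy : P (e.symm y).val := ⟨hlt, (e.symm y).isLt, by simpa using hy⟩
    have hex : ∃ t, P t := ⟨_, hPy⟩
    set k := Nat.find hex with hk
    obtain ⟨hk1, hkn, hkY⟩ := Nat.find_spec hex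
    have hkle : k ≤ (e.symm y).val := Nat.find_le hPy
    have hk1n : k - 1 < n := by omega
    have hprevS : e ⟨k - 1, hk1n⟩ ∈ S := by
      apply hS (e.symm x) ⟨k - 1, hk1n⟩ (e.symm y)
      · show (e.symm x).val ≤ k - 1; omega
      · show (k - 1 : ℕ) ≤ (e.symm y).val; omega
      · simpa using hxS
      · simpa using hyS
    have hprevX : e ⟨k - 1, hk1n⟩ ∈ X := by
      rcases (hXY ▸ hprevS : e ⟨k - 1, hk1n⟩ ∈ X ∪ Y) with h | h
      · exact h
      · by_cases hcase : (e.symm x).val < k - 1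
        · exact absurd ⟨hcase, hk1n, h⟩ (Nat.find_min hex (by omega))
        · have : (k - 1 : ℕ) = (e.symm x).val := by omega
          have hxe : e ⟨k - 1, hk1n⟩ = x := by
            have : (⟨k - 1, hk1n⟩ : Fin n) = e.symm x := Fin.ext (by simpa using this)
            rw [this]; simp
          exact absurd (hxe ▸ h) hxY
    refine ⟨_, hprevX, _, hkY, ?_⟩
    rw [hadj]
    show k - 1 ≤ k + 1 ∧ k ≤ (k - 1) + 1
    omega
  have haS : a ∈ S := hAB ▸ Set.mem_union_left B ha
  have hbS : b ∈ S := hAB ▸ Set.mem_union_right A hb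
  have haB : a ∉ B := fun h => (hdisj.ne_of_mem ha h) rfl
  have hbA : b ∉ A := fun h => (hdisj.ne_of_mem h hb) rfl
  have hne : (e.symm a).val ≠ (e.symm b).val := by
    intro h
    have : a = b := by
      have : e.symm a = e.symm b := Fin.ext h
      simpa using congrArg e this
    exact haB (this ▸ hb)
  rcases lt_or_gt_of_ne hne with hlt | hgt
  · exact key A B hAB a ha b hb haB hlt
  · obtain ⟨u, hu, v, hv, huv⟩ := key B A (by rw [Set.union_comm]; exact hAB) b hb a ha hbA hgt
    exact ⟨v, hv, u, hu, hsym _ _ huv⟩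

theorem interval_of_conn
    (hadj : ∀ i j : Fin n, sq (e i) (e j) ↔ i.val ≤ j.val + 1 ∧ j.val ≤ i.val + 1)
    (S : Set V) (hS : IsConn sq S) : IsIntervalIdx e S := by
  intro a b c hab hbc haS hcS
  by_contra hbS
  have hab' : a.val < b.val := by
    rcases lt_or_eq_of_le (show a.val ≤ b.val from hab) with h | h
    · exact h
    · exact absurd (by rw [show a = b from Fin.ext h] at haS; exact haS) hbS
  have hbc' : b.val < c.val := by
    rcases lt_or_eq_of_le (show b.val ≤ c.val from hbc) with h | h
    · exact h
    · exact absurd (by rw [← show b = c from Fin.ext h] at hcS; exact hcS) hbS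
  set A : Set V := {x ∈ S | (e.symm x).val < b.val} with hA
  set B : Set V := {x ∈ S | b.val < (e.symm x).val} with hB
  have hunion : A ∪ B = S := by
    ext x
    simp only [hA, hB, Set.mem_union, Set.mem_setOf_eq]
    constructor
    · rintro (⟨h, -⟩ | ⟨h, -⟩) <;> exact h
    · intro hx
      rcases lt_trichotomy (e.symm x).val b.val with h | h | h
      · exact Or.inl ⟨hx, h⟩
      · exfalso
        have hxb : x = e b := by
          have : e.symm x = b := Fin.ext h
          rw [← this]; simp
        exact hbS (hxb ▸ hx)
      · exact Or.inr ⟨hx, h⟩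
  have hdisj : Disjoint A B := by
    rw [Set.disjoint_left]
    rintro x ⟨-, h1⟩ ⟨-, h2⟩
    omega
  obtain ⟨x, hxA, y, hyB, hxy⟩ := hS A B hunion hdisj
    ⟨e a, haS, by simpa using hab'⟩ ⟨e c, hcS, by simpa using hbc'⟩
  have h1 : (e.symm x).val < b.val := hxA.2
  have h2 : b.val < (e.symm y).val := hyB.2
  have hadj' := (hadj (e.symm x) (e.symm y)).mp (by simpa using hxy)
  omega

end Interval


theorem endpos {V : Type*} [Finite V] {n : ℕ} (e : Fin n ≃ V) (sq : V → V → Prop)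
    (hadj : ∀ i j : Fin n, sq (e i) (e j) ↔ i.val ≤ j.val + 1 ∧ j.val ≤ i.val + 1)
    (x : V) (hx : {w | w ≠ x ∧ sq x w}.ncard ≤ 1) :
    (e.symm x).val = 0 ∨ (e.symm x).val = n - 1 := by
  by_contra hcon
  push_neg at hcon
  set i := e.symm x with hi
  have hin : i.val < n := i.isLt
  have h1 : 0 < i.val := Nat.pos_of_ne_zero hcon.1
  have h2 : i.val < n - 1 := by omega
  set a := e ⟨i.val - 1, by omega⟩ with ha
  set b := e ⟨i.val + 1, by omega⟩ with hb
  have hex : e i = x := by rw [hi]; simp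
  have hane : a ≠ x := by
    rw [← hex, ha]; intro h
    have h2 := congrArg Fin.val (e.injective h)
    simp at h2
    all_goals omega
  have hbne : b ≠ x := by
    rw [← hex, hb]; intro h
    have h2 := congrArg Fin.val (e.injective h)
    simp at h2
  have hab : a ≠ b := by
    rw [ha, hb]; intro h
    have h2 := congrArg Fin.val (e.injective h)
    simp at h2
    all_goals omega
  have hsa : sq x a := by
    rw [← hex, ha, hadj]; constructor <;> simp <;> omega
  have hsb : sq x b := by
    rw [← hex, hb, hadj]; constructor <;> simp <;> omega
  have : 1 < {w | w ≠ x ∧ sq x w}.ncard := by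
    rw [Set.one_lt_ncard_iff (Set.toFinite _)]
    exact ⟨a, b, ⟨hane, hsa⟩, ⟨hbne, hsb⟩, hab⟩
  omega

theorem pathEnumAux (N : ℕ) : ∀ {V : Type u} [Finite V] [Nonempty V]
    (sq : V → V → Prop), (∀ v, sq v v) → (∀ a b, sq a b → sq b a) →
    IsPathGraph sq → Nat.card V = N →
    ∃ (e : Fin N ≃ V), ∀ i j : Fin N, sq (e i) (e j) ↔ i.val ≤ j.val + 1 ∧ j.val ≤ i.val + 1 := by
  induction N using Nat.strong_induction_on with
  | _ N IH =>
  intro V _ _ sq hrefl hsym hpath hcard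
  have hNpos : 0 < N := hcard ▸ Nat.card_pos
  rcases Nat.lt_or_ge N 2 with hN1 | hN2
  · -- N = 1
    have hN : N = 1 := by omega
    subst hN
    refine ⟨(Finite.equivFinOfCardEq hcard).symm, ?_⟩
    intro i j
    have : i = j := Subsingleton.elim i j
    subst this
    have h1 : i.val = 0 := by omega
    exact ⟨fun _ => by omega, fun _ => hrefl _⟩
  · -- N ≥ 2
    have : DecidableEq V := Classical.decEq V
    have : Fintype V := Fintype.ofFinite V
    have hfcard : Fintype.card V = N := by rw [← Nat.card_eq_fintype_card]; exact hcard
    obtain ⟨v, hv⟩ := hpath.2.2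
    have hnontriv : Nontrivial V := by
      rw [← Fintype.one_lt_card_iff_nontrivial]; omega
    -- v has a unique neighbor w
    have hnbne : {w | w ≠ v ∧ sq v w}.Nonempty := by
      by_contra hcon
      rw [Set.not_nonempty_iff_eq_empty] at hcon
      obtain ⟨x, hxv⟩ := exists_ne v
      obtain ⟨a, ha, b, hb, hab⟩ := hpath.1 {v} {y | y ≠ v}
        (by ext y; simp; tauto)
        (by rw [Set.disjoint_left]; intro y hy1 hy2; simp at hy1 hy2; exact hy2 hy1)
        ⟨v, rfl⟩ ⟨x, hxv⟩
      have hmem : b ∈ {w | w ≠ v ∧ sq v w} := ⟨hb, by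
        have : a = v := ha
        rw [← this]; exact hab⟩
      rw [hcon] at hmem; exact hmem
    obtain ⟨w, hw⟩ := hnbne
    have hwuniq : ∀ x, x ≠ v → sq v x → x = w := by
      intro x hxv hsx
      by_contra hxw
      have : 1 < {w | w ≠ v ∧ sq v w}.ncard := by
        rw [Set.one_lt_ncard_iff (Set.toFinite _)]
        exact ⟨x, w, ⟨hxv, hsx⟩, hw, hxw⟩
      omega
    obtain ⟨hwv, hsvw⟩ := hw
    -- the subtype
    set V' := {x : V // x ≠ v} with hV'
    have : Nonempty V' := ⟨⟨w, hwv⟩⟩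
    set sq' : V' → V' → Prop := fun a b => sq a.val b.val with hsq'
    have hcard' : Nat.card V' = N - 1 := by
      rw [Nat.card_eq_fintype_card]
      have h1 : Fintype.card {x : V // ¬ x = v} = Fintype.card V - Fintype.card {x : V // x = v} :=
        Fintype.card_subtype_compl _
      have h2 : Fintype.card {x : V // x = v} = 1 := Fintype.card_subtype_eq v
      have h3 : Fintype.card {x : V // x ≠ v} = Fintype.card {x : V // ¬ x = v} := rfl
      rw [h3, h1, h2, hfcard]
    have hrefl' : ∀ a : V', sq' a a := fun a => hrefl a.val
    have hsym' : ∀ a b : V', sq' a b → sq' b a := fun a b h => hsym _ _ h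
    set wc : V' := ⟨w, hwv⟩ with hwc
    have hvy : ∀ y : V', sq v y.val → y = wc := by
      intro y hy
      exact Subtype.ext (hwuniq y.val y.prop hy)
    have hconn' : IsConn sq' Set.univ := by
      intro A B hAB hdisj hA hB
      have hwcmem : wc ∈ A ∪ B := by rw [hAB]; trivial
      have hAim : (Subtype.val '' A).Nonempty := hA.image _
      have hBim : (Subtype.val '' B).Nonempty := hB.image _
      have hdisjim : Disjoint (Subtype.val '' A) (Subtype.val '' B) := by
        rw [Set.disjoint_left]
        rintro x ⟨a', ha', rfl⟩ ⟨b', hb', hbeq⟩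
        exact (hdisj.ne_of_mem ha' hb') (Subtype.ext hbeq.symm)
      have hvA : v ∉ Subtype.val '' A := by rintro ⟨a', -, ha'⟩; exact a'.prop ha'
      have hvB : v ∉ Subtype.val '' B := by rintro ⟨b', -, hb'⟩; exact b'.prop hb'
      rcases hwcmem with hwcA | hwcB
      · obtain ⟨a, ha, b, hb, hab⟩ := hpath.1 (Subtype.val '' A ∪ {v}) (Subtype.val '' B)
          (by
            ext x
            simp only [Set.mem_union, Set.mem_image, Set.mem_singleton_iff, Set.mem_univ,
              iff_true]
            by_cases hx : x = v
            · exact Or.inl (Or.inr hx)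
            · have : (⟨x, hx⟩ : V') ∈ A ∪ B := by rw [hAB]; trivial
              rcases this with h | h
              · exact Or.inl (Or.inl ⟨⟨x, hx⟩, h, rfl⟩)
              · exact Or.inr ⟨⟨x, hx⟩, h, rfl⟩)
          (by
            rw [Set.disjoint_union_left]
            constructor
            · exact hdisjim
            · rw [Set.disjoint_left]; rintro x rfl; exact fun h => hvB h)
          (hAim.mono Set.subset_union_left) hBim
        rcases ha with haA | hav
        · obtain ⟨a', ha', rfl⟩ := haA
          obtain ⟨b', hb', rfl⟩ := hb
          exact ⟨a', ha', b', hb', hab⟩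
        · exfalso
          obtain ⟨b', hb', rfl⟩ := hb
          have : a = v := hav
          subst this
          have : b' = wc := hvy b' hab
          subst this
          exact (hdisj.ne_of_mem hwcA hb') rfl
      · obtain ⟨a, ha, b, hb, hab⟩ := hpath.1 (Subtype.val '' A) (Subtype.val '' B ∪ {v})
          (by
            ext x
            simp only [Set.mem_union, Set.mem_image, Set.mem_singleton_iff, Set.mem_univ,
              iff_true]
            by_cases hx : x = v
            · exact Or.inr (Or.inr hx)
            · have : (⟨x, hx⟩ : V') ∈ A ∪ B := by rw [hAB]; trivial
              rcases this with h | h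
              · exact Or.inl ⟨⟨x, hx⟩, h, rfl⟩
              · exact Or.inr (Or.inl ⟨⟨x, hx⟩, h, rfl⟩))
          (by
            rw [Set.disjoint_union_right]
            constructor
            · exact hdisjim
            · rw [Set.disjoint_right]; rintro x rfl; exact fun h => hvA h)
          hAim (hBim.mono Set.subset_union_left)
        rcases hb with hbB | hbv
        · obtain ⟨a', ha', rfl⟩ := ha
          obtain ⟨b', hb', rfl⟩ := hbB
          exact ⟨a', ha', b', hb', hab⟩
        · exfalso
          obtain ⟨a', ha', rfl⟩ := ha
          have : b = v := hbv
          subst this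
          have : a' = wc := hvy a' (hsym _ _ hab)
          subst this
          exact (hdisj.ne_of_mem ha' hwcB) rfl
    have hdeg' : ∀ x : V', {y : V' | y ≠ x ∧ sq' x y}.ncard ≤ 2 := by
      intro x
      have hsub : Subtype.val '' {y : V' | y ≠ x ∧ sq' x y} ⊆ {y | y ≠ x.val ∧ sq x.val y} := by
        rintro _ ⟨y, ⟨hy1, hy2⟩, rfl⟩
        exact ⟨fun h => hy1 (Subtype.ext h), hy2⟩
      calc {y : V' | y ≠ x ∧ sq' x y}.ncard
          = (Subtype.val '' {y : V' | y ≠ x ∧ sq' x y}).ncard :=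
            (Set.ncard_image_of_injective _ Subtype.val_injective).symm
        _ ≤ {y | y ≠ x.val ∧ sq x.val y}.ncard := Set.ncard_le_ncard hsub (Set.toFinite _)
        _ ≤ 2 := hpath.2.1 _
    have hend' : {y : V' | y ≠ wc ∧ sq' wc y}.ncard ≤ 1 := by
      have hsub : Subtype.val '' {y : V' | y ≠ wc ∧ sq' wc y} ⊆
          {y | y ≠ w ∧ sq w y} \ {v} := by
        rintro _ ⟨y, ⟨hy1, hy2⟩, rfl⟩
        exact ⟨⟨fun h => hy1 (Subtype.ext h), hy2⟩, y.prop⟩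
      have hvmem : v ∈ {y | y ≠ w ∧ sq w y} := ⟨Ne.symm hwv, hsym _ _ hsvw⟩
      have hd : ({y | y ≠ w ∧ sq w y} \ {v}).ncard = {y | y ≠ w ∧ sq w y}.ncard - 1 :=
        Set.ncard_diff_singleton_of_mem hvmem
      have h2 : {y | y ≠ w ∧ sq w y}.ncard ≤ 2 := hpath.2.1 w
      have h1 : 1 ≤ {y | y ≠ w ∧ sq w y}.ncard := by
        have : ({v} : Set V).ncard ≤ {y | y ≠ w ∧ sq w y}.ncard :=
          Set.ncard_le_ncard (by simpa using hvmem) (Set.toFinite _)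
        simpa using this
      calc {y : V' | y ≠ wc ∧ sq' wc y}.ncard
          = (Subtype.val '' {y : V' | y ≠ wc ∧ sq' wc y}).ncard :=
            (Set.ncard_image_of_injective _ Subtype.val_injective).symm
        _ ≤ ({y | y ≠ w ∧ sq w y} \ {v}).ncard := Set.ncard_le_ncard hsub (Set.toFinite _)
        _ ≤ 1 := by omega
    obtain ⟨e1, hadj1⟩ := IH (N - 1) (by omega) sq' hrefl' hsym'
      ⟨hconn', hdeg', wc, hend'⟩ hcard'
    have hpos := endpos e1 sq' hadj1 wc hend'
    obtain ⟨e2, hadj2, hw0⟩ : ∃ e2 : Fin (N - 1) ≃ V',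
        (∀ i j : Fin (N - 1), sq' (e2 i) (e2 j) ↔ i.val ≤ j.val + 1 ∧ j.val ≤ i.val + 1) ∧
          e2 ⟨0, by omega⟩ = wc := by
      rcases hpos with h | h
      · refine ⟨e1, hadj1, ?_⟩
        have : e1.symm wc = ⟨0, by omega⟩ := Fin.ext h
        rw [← this]; simp
      · refine ⟨Fin.revPerm.trans e1, ?_, ?_⟩
        · intro i j
          show sq' (e1 i.rev) (e1 j.rev) ↔ _
          rw [hadj1]
          have h1 := i.isLt
          have h2 := j.isLt
          rw [Fin.val_rev, Fin.val_rev]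
          omega
        · show e1 (Fin.rev _) = wc
          have : (Fin.rev (⟨0, by omega⟩ : Fin (N - 1))) = e1.symm wc := by
            apply Fin.ext
            rw [Fin.val_rev]
            simp [h]
          rw [this]; simp
    -- build the final enumeration
    set f : Fin N → V := fun i =>
      if h : i.val = 0 then v else (e2 ⟨i.val - 1, by omega⟩).val with hf
    have hf0 : ∀ i : Fin N, i.val = 0 → f i = v := by
      intro i h; rw [hf]; simp [h]
    have hfs : ∀ (i : Fin N) (h : i.val ≠ 0), f i = (e2 ⟨i.val - 1, by omega⟩).val := by
      intro i h; rw [hf]; simp [h]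
    have hinj : Function.Injective f := by
      intro i j hij
      by_cases hi : i.val = 0 <;> by_cases hj : j.val = 0
      · exact Fin.ext (by rw [hi, hj])
      · rw [hf0 i hi, hfs j hj] at hij
        exact absurd hij.symm (e2 ⟨j.val - 1, by omega⟩).prop
      · rw [hf0 j hj, hfs i hi] at hij
        exact absurd hij (e2 ⟨i.val - 1, by omega⟩).prop
      · rw [hfs i hi, hfs j hj] at hij
        have := congrArg Fin.val (e2.injective (Subtype.ext hij))
        simp at this
        apply Fin.ext
        omega
    have hsurj : Function.Surjective f := by
      intro x
      by_cases hx : x = v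
      · exact ⟨⟨0, by omega⟩, by rw [hf0 ⟨0, by omega⟩ rfl, hx]⟩
      · refine ⟨⟨(e2.symm ⟨x, hx⟩).val + 1, by have := (e2.symm ⟨x, hx⟩).isLt; omega⟩, ?_⟩
        rw [hfs _ (by simp)]
        have : (⟨(e2.symm ⟨x, hx⟩).val + 1 - 1, by omega⟩ : Fin (N - 1)) = e2.symm ⟨x, hx⟩ :=
          Fin.ext (by simp)
        rw [this]
        simp
    refine ⟨Equiv.ofBijective f ⟨hinj, hsurj⟩, ?_⟩
    intro i j
    show sq (f i) (f j) ↔ _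
    have hi' := i.isLt
    have hj' := j.isLt
    by_cases hi : i.val = 0 <;> by_cases hj : j.val = 0
    · rw [hf0 i hi, hf0 j hj]
      constructor
      · intro; omega
      · intro; exact hrefl v
    · rw [hf0 i hi, hfs j hj]
      constructor
      · intro hsq
        have := hvy _ hsq
        have h2 : (⟨j.val - 1, by omega⟩ : Fin (N - 1)) = ⟨0, by omega⟩ := by
          apply e2.injective
          rw [this, hw0]
        have := congrArg Fin.val h2
        simp at this
        omega
      · intro hij
        have h2 : (⟨j.val - 1, by omega⟩ : Fin (N - 1)) = ⟨0, by omega⟩ :=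
          Fin.ext (by simp; omega)
        rw [h2, hw0]
        exact hsvw
    · rw [hfs i hi, hf0 j hj]
      constructor
      · intro hsq
        have := hvy _ (hsym _ _ hsq)
        have h2 : (⟨i.val - 1, by omega⟩ : Fin (N - 1)) = ⟨0, by omega⟩ := by
          apply e2.injective
          rw [this, hw0]
        have := congrArg Fin.val h2
        simp at this
        omega
      · intro hij
        have h2 : (⟨i.val - 1, by omega⟩ : Fin (N - 1)) = ⟨0, by omega⟩ :=
          Fin.ext (by simp; omega)
        rw [h2, hw0]
        exact hsym _ _ hsvw
    · rw [hfs i hi, hfs j hj]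
      have := hadj2 ⟨i.val - 1, by omega⟩ ⟨j.val - 1, by omega⟩
      rw [show sq' (e2 ⟨i.val - 1, by omega⟩) (e2 ⟨j.val - 1, by omega⟩) =
        sq (e2 ⟨i.val - 1, by omega⟩).val (e2 ⟨j.val - 1, by omega⟩).val from rfl] at this
      rw [this]
      simp only []
      omega


section Mono
variable {m n : ℕ}

theorem noDescAsc (hm : 0 < m) (hn : 0 < n) (F : ℕ → ℕ)
    (hbound : ∀ i < m, F i ≤ 2*n-2)
    (hev : ∀ j < n, ∃ i < m, F i = 2*j)
    (hU : ∀ t : ℕ, t % 2 = 1 → ∀ a b c : ℕ, a ≤ b → b ≤ c → c < m →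
      t ≤ F a → t ≤ F c → t ≤ F b)
    (hL : ∀ t : ℕ, t % 2 = 1 → ∀ a b c : ℕ, a ≤ b → b ≤ c → c < m →
      F a ≤ t → F c ≤ t → F b ≤ t) :
    ¬ ∃ p p' : ℕ, p < p' ∧ p' + 1 < m ∧ F (p+1) < F p ∧ F p' < F (p'+1) := by
  rintro ⟨p, p', hpp, hp'm, hdesc, hasc⟩
  -- minimum of F over Icc (p+1) p'
  obtain ⟨c, hcmem, hcmin⟩ := Finset.exists_min_image (Finset.Icc (p+1) p') F
    ⟨p', by simp; omega⟩
  rw [Finset.mem_Icc] at hcmem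
  have hcmin' : ∀ x, p + 1 ≤ x → x ≤ p' → F c ≤ F x := by
    intro x h1 h2
    exact hcmin x (by rw [Finset.mem_Icc]; omega)
  set v := F c with hv
  have hpv : v + 1 ≤ F p := by
    have := hcmin' (p+1) (by omega) (by omega)
    omega
  have hp'v : v + 1 ≤ F (p'+1) := by
    have := hcmin' p' (by omega) (by omega)
    omega
  rcases Nat.mod_two_eq_zero_or_one v with hpar | hpar
  · -- v even: use upper level set at v+1
    have : v + 1 ≤ F c := by
      apply hU (v+1) (by omega) p c (p'+1) (by omega) (by omega) (by omega) hpv hp'v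
    omega
  · -- v odd, v = 2j+1
    obtain ⟨j, hj⟩ : ∃ j, v = 2*j + 1 := ⟨v / 2, by omega⟩
    have hcb : F c ≤ 2*n-2 := hbound c (by omega)
    have hjn : j < n := by omega
    obtain ⟨x0, hx0m, hx0⟩ := hev j hjn
    have hx0out : ¬ (p + 1 ≤ x0 ∧ x0 ≤ p') := by
      rintro ⟨h1, h2⟩
      have := hcmin' x0 h1 h2
      omega
    have hx0p : x0 ≠ p := by intro h; rw [h] at hx0; omega
    have hx0p' : x0 ≠ p' + 1 := by intro h; rw [h] at hx0; omega
    rcases Nat.lt_or_ge x0 (p+1) with hcase | hcase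
    · have : F p ≤ v := by
        apply hL v (by omega) x0 p c (by omega) (by omega) (by omega) (by omega) (by omega)
      omega
    · have : F (p'+1) ≤ v := by
        apply hL v (by omega) c (p'+1) x0 (by omega) (by omega) (by omega) (by omega) (by omega)
      omega

theorem monoOrAnti (hm : 0 < m) (hn : 0 < n) (F : ℕ → ℕ)
    (hbound : ∀ i < m, F i ≤ 2*n-2)
    (hev : ∀ j < n, ∃ i < m, F i = 2*j)
    (hU : ∀ t : ℕ, t % 2 = 1 → ∀ a b c : ℕ, a ≤ b → b ≤ c → c < m →
      t ≤ F a → t ≤ F c → t ≤ F b)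
    (hL : ∀ t : ℕ, t % 2 = 1 → ∀ a b c : ℕ, a ≤ b → b ≤ c → c < m →
      F a ≤ t → F c ≤ t → F b ≤ t) :
    (∀ a b, a ≤ b → b < m → F a ≤ F b) ∨ (∀ a b, a ≤ b → b < m → F b ≤ F a) := by
  by_cases hdesc : ∃ p, p + 1 < m ∧ F (p+1) < F p
  · -- no ascent allowed: show antitone
    right
    obtain ⟨p, hpm, hp⟩ := hdesc
    have noasc : ∀ p', p' + 1 < m → F (p'+1) ≤ F p' := by
      intro p' hp'
      by_contra hcon
      push_neg at hcon
      rcases Nat.lt_trichotomy p p' with h | h | h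
      · exact noDescAsc hm hn F hbound hev hU hL ⟨p, p', h, hp', hp, hcon⟩
      · subst h; omega
      · -- ascent before descent: use reflected function
        set G : ℕ → ℕ := fun i => 2*n - 2 - F i with hG
        have hGbound : ∀ i < m, G i ≤ 2*n-2 := by
          intro i him
          show 2*n - 2 - F i ≤ 2*n - 2
          omega
        have hGev : ∀ j < n, ∃ i < m, G i = 2*j := by
          intro j hj
          obtain ⟨i, him, hi⟩ := hev (n - 1 - j) (by omega)
          refine ⟨i, him, ?_⟩
          show 2*n - 2 - F i = 2*j
          omega
        have hGU : ∀ t : ℕ, t % 2 = 1 → ∀ a b c : ℕ, a ≤ b → b ≤ c → c < m →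
            t ≤ G a → t ≤ G c → t ≤ G b := by
          intro t ht a b c hab hbc hcm h1 h2
          have hFa := hbound a (by omega)
          have hFc := hbound c (by omega)
          have hFb := hbound b (by omega)
          have h1' : t ≤ 2*n - 2 - F a := h1
          have h2' : t ≤ 2*n - 2 - F c := h2
          have key : F b ≤ 2*n - 2 - t :=
            hL (2*n-2-t) (by omega) a b c hab hbc hcm (by omega) (by omega)
          show t ≤ 2*n - 2 - F b
          omega
        have hGL : ∀ t : ℕ, t % 2 = 1 → ∀ a b c : ℕ, a ≤ b → b ≤ c → c < m →
            G a ≤ t → G c ≤ t → G b ≤ t := by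
          intro t ht a b c hab hbc hcm h1 h2
          have hFa := hbound a (by omega)
          have hFc := hbound c (by omega)
          have hFb := hbound b (by omega)
          have h1' : 2*n - 2 - F a ≤ t := h1
          have h2' : 2*n - 2 - F c ≤ t := h2
          show 2*n - 2 - F b ≤ t
          by_cases htn : 2*n - 2 ≤ t
          · omega
          · have key : 2*n - 2 - t ≤ F b :=
              hU (2*n-2-t) (by omega) a b c hab hbc hcm (by omega) (by omega)
            omega
        have hFp := hbound p (by omega)
        have hFp1 := hbound (p+1) (by omega)
        have hFp' := hbound p' (by omega)
        have hFp'1 := hbound (p'+1) (by omega)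
        apply noDescAsc hm hn G hGbound hGev hGU hGL
        refine ⟨p', p, h, hpm, ?_, ?_⟩
        · show 2*n - 2 - F (p'+1) < 2*n - 2 - F p'
          omega
        · show 2*n - 2 - F p < 2*n - 2 - F (p+1)
          omega
    -- antitone from no ascent
    have step : ∀ d a, a + d < m → F (a + d) ≤ F a := by
      intro d
      induction d with
      | zero => intro a _; simp
      | succ k ih =>
        intro a ha
        have h1 := ih a (by omega)
        have h2 := noasc (a + k) (by omega)
        calc F (a + (k+1)) = F ((a+k) + 1) := by ring_nf
          _ ≤ F (a+k) := h2
          _ ≤ F a := h1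
    intro a b hab hbm
    have := step (b - a) a (by omega)
    rw [show a + (b - a) = b by omega] at this
    exact this
  · -- no descent: monotone
    left
    push_neg at hdesc
    have step : ∀ d a, a + d < m → F a ≤ F (a + d) := by
      intro d
      induction d with
      | zero => intro a _; simp
      | succ k ih =>
        intro a ha
        have h1 := ih a (by omega)
        have h2 := hdesc (a + k) (by omega)
        calc F a ≤ F (a+k) := h1
          _ ≤ F ((a+k)+1) := h2
          _ = F (a + (k+1)) := by ring_nf
    intro a b hab hbm
    have := step (b - a) a (by omega)
    rw [show a + (b - a) = b by omega] at this
    exact this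
end Mono


theorem exists_repr {R P : Type*} (sqR : R → R → Prop) (sqP : P → P → Prop)
    {n m : ℕ} (hn : 0 < n) (hm : 0 < m) (eR : Fin n ≃ R) (eP : Fin m ≃ P)
    (hadjR : ∀ i j : Fin n, sqR (eR i) (eR j) ↔ i.val ≤ j.val + 1 ∧ j.val ≤ i.val + 1)
    (hadjP : ∀ i j : Fin m, sqP (eP i) (eP j) ↔ i.val ≤ j.val + 1 ∧ j.val ≤ i.val + 1)
    (hsymR : ∀ a b, sqR a b → sqR b a)
    (A : R → P → Prop) (hAep : EdgePreserving sqP sqR A) (hAco : CoSurjective A)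
    (hAci : CoInjective A) (hAmono : RelMonotone sqP sqR A) :
    ∃ F : ℕ → ℕ,
      (∀ (j : Fin n) (i : Fin m),
        A (eR j) (eP i) ↔ (F i.val ≤ 2*j.val+1 ∧ 2*j.val ≤ F i.val + 1)) ∧
      (∀ i < m, F i ≤ 2*n-2) ∧
      (∀ i, i+1 < m → (max (F i) (F (i+1)) + 1)/2 ≤ min (F i) (F (i+1))/2 + 1) ∧
      (∀ j < n, ∃ i < m, F i = 2*j) ∧
      ((∀ a b, a ≤ b → b < m → F a ≤ F b) ∨ (∀ a b, a ≤ b → b < m → F b ≤ F a)) := by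
  classical
  set SS : Fin m → Finset (Fin n) := fun i => Finset.univ.filter (fun j => A (eR j) (eP i))
    with hSS
  have hSSmem : ∀ (i : Fin m) (j : Fin n), j ∈ SS i ↔ A (eR j) (eP i) := by
    intro i j; rw [hSS]; simp
  have hSSne : ∀ i, (SS i).Nonempty := by
    intro i
    obtain ⟨r, hr⟩ := hAco (eP i)
    exact ⟨eR.symm r, by rw [hSSmem]; simpa using hr⟩
  have hclq : ∀ (i : Fin m), ∀ j ∈ SS i, ∀ k ∈ SS i, j.val ≤ k.val + 1 := by
    intro i j hj k hk
    rw [hSSmem] at hj hk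
    have := hAep (eR j) (eP i) (eP i) (eR k) hj
      ((hadjP i i).mpr (by omega)) hk
    exact ((hadjR j k).mp this).1
  set F : ℕ → ℕ := fun i =>
    if h : i < m then ((SS ⟨i, h⟩).min' (hSSne _)).val + ((SS ⟨i, h⟩).max' (hSSne _)).val
    else 0 with hF
  have hFval : ∀ (i : Fin m),
      F i.val = ((SS i).min' (hSSne _)).val + ((SS i).max' (hSSne _)).val := by
    intro i
    rw [hF]
    simp only [i.isLt, dif_pos]
  have hmm : ∀ i : Fin m, ((SS i).min' (hSSne _)).val ≤ ((SS i).max' (hSSne _)).val ∧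
      ((SS i).max' (hSSne _)).val ≤ ((SS i).min' (hSSne _)).val + 1 := by
    intro i
    constructor
    · exact Fin.le_def.mp (Finset.min'_le _ _ (Finset.max'_mem _ _))
    · exact hclq i _ (Finset.max'_mem _ _) _ (Finset.min'_mem _ _)
  have hrepr : ∀ (j : Fin n) (i : Fin m),
      A (eR j) (eP i) ↔ (F i.val ≤ 2*j.val+1 ∧ 2*j.val ≤ F i.val + 1) := by
    intro j i
    rw [← hSSmem, hFval i]
    obtain ⟨h1, h2⟩ := hmm i
    constructor
    · intro hj
      have ha := Fin.le_def.mp (Finset.min'_le _ _ hj)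
      have hb := Fin.le_def.mp (Finset.le_max' _ _ hj)
      omega
    · rintro ⟨ha, hb⟩
      have : j.val = ((SS i).min' (hSSne _)).val ∨ j.val = ((SS i).max' (hSSne _)).val := by
        omega
      rcases this with h | h
      · rw [show j = (SS i).min' (hSSne _) from Fin.ext h]
        exact Finset.min'_mem _ _
      · rw [show j = (SS i).max' (hSSne _) from Fin.ext h]
        exact Finset.max'_mem _ _
  have hbound : ∀ i < m, F i ≤ 2*n - 2 := by
    intro i hi
    have h := hFval ⟨i, hi⟩
    have h1 := (hmm ⟨i, hi⟩).1
    have h2 := ((SS ⟨i, hi⟩).max' (hSSne _)).isLt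
    simp at h
    omega
  have hstep : ∀ i, i+1 < m → (max (F i) (F (i+1)) + 1)/2 ≤ min (F i) (F (i+1))/2 + 1 := by
    intro i hi
    have him : i < m := by omega
    set i1 : Fin m := ⟨i, him⟩
    set i2 : Fin m := ⟨i+1, hi⟩
    have hcross : ∀ j ∈ SS i1, ∀ k ∈ SS i2, j.val ≤ k.val + 1 ∧ k.val ≤ j.val + 1 := by
      intro j hj k hk
      rw [hSSmem] at hj hk
      have := hAep (eR j) (eP i1) (eP i2) (eR k) hj
        ((hadjP i1 i2).mpr (by constructor <;> simp [i1, i2] <;> omega)) hk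
      exact (hadjR j k).mp this
    have hc1 := hcross _ (Finset.min'_mem _ (hSSne i1)) _ (Finset.min'_mem _ (hSSne i2))
    have hc2 := hcross _ (Finset.min'_mem _ (hSSne i1)) _ (Finset.max'_mem _ (hSSne i2))
    have hc3 := hcross _ (Finset.max'_mem _ (hSSne i1)) _ (Finset.min'_mem _ (hSSne i2))
    have hc4 := hcross _ (Finset.max'_mem _ (hSSne i1)) _ (Finset.max'_mem _ (hSSne i2))
    have hv1 : F i = ((SS i1).min' (hSSne _)).val + ((SS i1).max' (hSSne _)).val := hFval i1
    have hv2 : F (i+1) = ((SS i2).min' (hSSne _)).val + ((SS i2).max' (hSSne _)).val := hFval i2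
    have hm1 := hmm i1
    have hm2 := hmm i2
    omega
  have hev : ∀ j < n, ∃ i < m, F i = 2*j := by
    intro j hj
    obtain ⟨p, hp⟩ := hAci (eR ⟨j, hj⟩)
    refine ⟨(eP.symm p).val, (eP.symm p).isLt, ?_⟩
    have hpe : eP (eP.symm p) = p := by simp
    have huniq : ∀ k ∈ SS (eP.symm p), k = (⟨j, hj⟩ : Fin n) := by
      intro k hk
      rw [hSSmem, hpe] at hk
      have : eR k ∈ {r' | A r' p} := hk
      rw [hp] at this
      exact eR.injective this
    have h1 := huniq _ (Finset.min'_mem _ (hSSne (eP.symm p)))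
    have h2 := huniq _ (Finset.max'_mem _ (hSSne (eP.symm p)))
    rw [hFval (eP.symm p), h1, h2]
    simp
    omega
  -- upper level sets
  have hU : ∀ t : ℕ, t % 2 = 1 → ∀ a b c : ℕ, a ≤ b → b ≤ c → c < m →
      t ≤ F a → t ≤ F c → t ≤ F b := by
    intro t ht a b c hab hbc hcm hta htc
    have ham : a < m := by omega
    have hbm : b < m := by omega
    by_cases htn : 2*n - 2 < t
    · have := hbound a ham; omega
    · push_neg at htn
      set j0 : ℕ := (t+1)/2 with hj0
      set C : Set R := {r | ∃ jj : Fin n, r = eR jj ∧ j0 ≤ jj.val} with hC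
      have hCmem : ∀ jj : Fin n, eR jj ∈ C ↔ j0 ≤ jj.val := by
        intro jj
        constructor
        · rintro ⟨jj', hjj', h⟩
          have : jj = jj' := eR.injective hjj'
          rw [this]; exact h
        · intro h; exact ⟨jj, rfl, h⟩
      have hCconn : IsConn sqR C := by
        apply conn_of_interval eR sqR hadjR hsymR
        intro x y z hxy hyz hx hz
        rw [hCmem] at hx ⊢
        rw [Fin.le_def] at hxy
        omega
      have hPconn := hAmono C hCconn
      have hPint := interval_of_conn eP sqP hadjP _ hPconn
      have hmemF : ∀ x : Fin m, eP x ∈ Preim A C ↔ t ≤ F x.val := by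
        intro x
        constructor
        · rintro ⟨r, hrC, hrA⟩
          obtain ⟨jj, rfl, hjj⟩ := hrC
          have := (hrepr jj x).mp hrA
          omega
        · intro hx
          have hxb := hbound x.val x.isLt
          refine ⟨eR ⟨(F x.val + 1)/2, by omega⟩, ?_, ?_⟩
          · rw [hCmem]; simp; omega
          · rw [hrepr]; simp; omega
      have h1 : eP ⟨b, hbm⟩ ∈ Preim A C := by
        apply hPint ⟨a, ham⟩ ⟨b, hbm⟩ ⟨c, hcm⟩
        · rw [Fin.le_def]; exact hab
        · rw [Fin.le_def]; exact hbc
        · rw [hmemF]; exact hta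
        · rw [hmemF]; exact htc
      have := (hmemF ⟨b, hbm⟩).mp h1
      exact this
  have hL : ∀ t : ℕ, t % 2 = 1 → ∀ a b c : ℕ, a ≤ b → b ≤ c → c < m →
      F a ≤ t → F c ≤ t → F b ≤ t := by
    intro t ht a b c hab hbc hcm hta htc
    have ham : a < m := by omega
    have hbm : b < m := by omega
    by_cases htn : 2*n - 2 ≤ t
    · have := hbound b hbm; omega
    · push_neg at htn
      set j1 : ℕ := t/2 with hj1
      set C : Set R := {r | ∃ jj : Fin n, r = eR jj ∧ jj.val ≤ j1} with hC
      have hCmem : ∀ jj : Fin n, eR jj ∈ C ↔ jj.val ≤ j1 := by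
        intro jj
        constructor
        · rintro ⟨jj', hjj', h⟩
          have : jj = jj' := eR.injective hjj'
          rw [this]; exact h
        · intro h; exact ⟨jj, rfl, h⟩
      have hCconn : IsConn sqR C := by
        apply conn_of_interval eR sqR hadjR hsymR
        intro x y z hxy hyz hx hz
        rw [hCmem] at hz ⊢
        rw [Fin.le_def] at hyz
        omega
      have hPconn := hAmono C hCconn
      have hPint := interval_of_conn eP sqP hadjP _ hPconn
      have hmemF : ∀ x : Fin m, eP x ∈ Preim A C ↔ F x.val ≤ t := by
        intro x
        constructor
        · rintro ⟨r, hrC, hrA⟩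
          obtain ⟨jj, rfl, hjj⟩ := hrC
          have := (hrepr jj x).mp hrA
          omega
        · intro hx
          have hxb := hbound x.val x.isLt
          refine ⟨eR ⟨F x.val / 2, by omega⟩, ?_, ?_⟩
          · rw [hCmem]; simp; omega
          · rw [hrepr]; simp; omega
      have h1 : eP ⟨b, hbm⟩ ∈ Preim A C := by
        apply hPint ⟨a, ham⟩ ⟨b, hbm⟩ ⟨c, hcm⟩
        · rw [Fin.le_def]; exact hab
        · rw [Fin.le_def]; exact hbc
        · rw [hmemF]; exact hta
        · rw [hmemF]; exact htc
      exact (hmemF ⟨b, hbm⟩).mp h1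
  exact ⟨F, hrepr, hbound, hstep, hev, monoOrAnti hm hn F hbound hev hU hL⟩


theorem exists_repr_mono {R P : Type*} (sqR : R → R → Prop) (sqP : P → P → Prop)
    {n m : ℕ} (hn : 0 < n) (hm : 0 < m) (eR : Fin n ≃ R) (eP0 : Fin m ≃ P)
    (hadjR : ∀ i j : Fin n, sqR (eR i) (eR j) ↔ i.val ≤ j.val + 1 ∧ j.val ≤ i.val + 1)
    (hadjP0 : ∀ i j : Fin m, sqP (eP0 i) (eP0 j) ↔ i.val ≤ j.val + 1 ∧ j.val ≤ i.val + 1)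
    (hsymR : ∀ a b, sqR a b → sqR b a)
    (A : R → P → Prop) (hAep : EdgePreserving sqP sqR A) (hAco : CoSurjective A)
    (hAci : CoInjective A) (hAmono : RelMonotone sqP sqR A) :
    ∃ (eP : Fin m ≃ P),
      (∀ i j : Fin m, sqP (eP i) (eP j) ↔ i.val ≤ j.val + 1 ∧ j.val ≤ i.val + 1) ∧
      ∃ F : ℕ → ℕ,
      (∀ (j : Fin n) (i : Fin m),
        A (eR j) (eP i) ↔ (F i.val ≤ 2*j.val+1 ∧ 2*j.val ≤ F i.val + 1)) ∧
      (∀ i < m, F i ≤ 2*n-2) ∧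
      (∀ i, i+1 < m → (max (F i) (F (i+1)) + 1)/2 ≤ min (F i) (F (i+1))/2 + 1) ∧
      (∀ j < n, ∃ i < m, F i = 2*j) ∧
      (∀ a b, a ≤ b → b < m → F a ≤ F b) := by
  obtain ⟨F, hrepr, hb, hstep, hev, hma⟩ := exists_repr sqR sqP hn hm eR eP0
    hadjR hadjP0 hsymR A hAep hAco hAci hAmono
  rcases hma with hmono | hanti
  · exact ⟨eP0, hadjP0, F, hrepr, hb, hstep, hev, hmono⟩
  · set eP : Fin m ≃ P := Fin.revPerm.trans eP0 with heP
    have hePval : ∀ i : Fin m, eP i = eP0 i.rev := fun i => rfl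
    have hadjP : ∀ i j : Fin m, sqP (eP i) (eP j) ↔ i.val ≤ j.val + 1 ∧ j.val ≤ i.val + 1 := by
      intro i j
      rw [hePval, hePval, hadjP0]
      rw [Fin.val_rev, Fin.val_rev]
      have h1 := i.isLt
      have h2 := j.isLt
      omega
    set F' : ℕ → ℕ := fun i => if i < m then F (m - 1 - i) else 0 with hF'
    have hF'val : ∀ i < m, F' i = F (m - 1 - i) := by
      intro i h; rw [hF']; simp [h]
    refine ⟨eP, hadjP, F', ?_, ?_, ?_, ?_, ?_⟩
    · intro j i
      rw [hePval, hrepr j i.rev, Fin.val_rev, hF'val i.val i.isLt]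
      have hiv : m - (i.val + 1) = m - 1 - i.val := by omega
      rw [hiv]
    · intro i hi
      rw [hF'val i hi]
      exact hb _ (by omega)
    · intro i hi
      rw [hF'val i (by omega), hF'val (i+1) hi]
      have h1 : m - 1 - i = (m - 2 - i) + 1 := by omega
      have h2 : m - 1 - (i+1) = m - 2 - i := by omega
      rw [h1, h2]
      have := hstep (m - 2 - i) (by omega)
      omega
    · intro j hj
      obtain ⟨i, him, hi⟩ := hev j hj
      refine ⟨m - 1 - i, by omega, ?_⟩
      rw [hF'val _ (by omega), show m - 1 - (m - 1 - i) = i by omega]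
      exact hi
    · intro a b hab hbm
      rw [hF'val a (by omega), hF'val b hbm]
      exact hanti (m - 1 - b) (m - 1 - a) (by omega) (by omega)

theorem card_fin_filter (m : ℕ) (p : ℕ → Prop) [DecidablePred p] :
    (Finset.univ.filter (fun i : Fin m => p i.val)).card = ((Finset.range m).filter p).card := by
  apply Finset.card_bij (fun i _ => i.val)
  · intro a ha
    rw [Finset.mem_filter] at ha ⊢
    exact ⟨Finset.mem_range.mpr a.isLt, ha.2⟩
  · intro a ha b hb hab
    exact Fin.ext hab
  · intro b hb
    rw [Finset.mem_filter, Finset.mem_range] at hb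
    exact ⟨⟨b, hb.1⟩, Finset.mem_filter.mpr ⟨Finset.mem_univ _, hb.2⟩, rfl⟩

theorem ncard_fiber_eq {P R : Type*} [Finite P] {n m : ℕ} (hn : 0 < n)
    (eR : Fin n ≃ R) (eP : Fin m ≃ P) (A : R → P → Prop) (F : ℕ → ℕ)
    (hrepr : ∀ (j : Fin n) (i : Fin m),
      A (eR j) (eP i) ↔ (F i.val ≤ 2*j.val+1 ∧ 2*j.val ≤ F i.val + 1))
    (hb : ∀ i < m, F i ≤ 2*n-2) (k : ℕ) (hk : k < 2*n-1) :
    {p | {r | A r p} = {r | ∃ j : Fin n, r = eR j ∧ k ≤ 2*j.val+1 ∧ 2*j.val ≤ k+1}}.ncard =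
      ((Finset.range m).filter (fun i => F i = k)).card := by
  classical
  set CC : ℕ → Set R := fun t => {r | ∃ j : Fin n, r = eR j ∧ t ≤ 2*j.val+1 ∧ 2*j.val ≤ t+1}
    with hCC
  have hCCmem : ∀ (t : ℕ) (j : Fin n), eR j ∈ CC t ↔ (t ≤ 2*j.val+1 ∧ 2*j.val ≤ t+1) := by
    intro t j
    constructor
    · rintro ⟨j', hj', h1, h2⟩
      have : j = j' := eR.injective hj'
      rw [this]; exact ⟨h1, h2⟩
    · intro h; exact ⟨j, rfl, h.1, h.2⟩
  have hfib : ∀ i : Fin m, {r | A r (eP i)} = CC (F i.val) := by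
    intro i
    ext r
    have hr : eR (eR.symm r) = r := by simp
    rw [← hr]
    rw [Set.mem_setOf_eq, hrepr (eR.symm r) i, hCCmem]
  have hCCinj : ∀ t t', t < 2*n-1 → t' < 2*n-1 → CC t = CC t' → t = t' := by
    intro t t' ht ht' heq
    have m1 : eR ⟨t/2, by omega⟩ ∈ CC t := by rw [hCCmem]; simp; omega
    have m2 : eR ⟨(t+1)/2, by omega⟩ ∈ CC t := by rw [hCCmem]; simp; omega
    have m3 : eR ⟨t'/2, by omega⟩ ∈ CC t' := by rw [hCCmem]; simp; omega
    have m4 : eR ⟨(t'+1)/2, by omega⟩ ∈ CC t' := by rw [hCCmem]; simp; omega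
    rw [heq] at m1 m2
    rw [← heq] at m3 m4
    rw [hCCmem] at m1 m2 m3 m4
    simp at m1 m2 m3 m4
    omega
  have hset : {p | {r | A r p} = CC k} = eP '' {i : Fin m | F i.val = k} := by
    ext p
    constructor
    · intro hp
      have hp' : {r | A r (eP (eP.symm p))} = CC k := by
        rw [show eP (eP.symm p) = p by simp]
        exact hp
      rw [hfib (eP.symm p)] at hp'
      have hFb : F (eP.symm p).val < 2*n-1 := by
        have := hb (eP.symm p).val (eP.symm p).isLt
        omega
      have := hCCinj _ _ hFb hk hp'
      exact ⟨eP.symm p, this, by simp⟩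
    · rintro ⟨i, hi, rfl⟩
      rw [Set.mem_setOf_eq, hfib i, hi]
  rw [hset, Set.ncard_image_of_injective _ eP.injective]
  have : {i : Fin m | F i.val = k} = ↑(Finset.univ.filter (fun i : Fin m => F i.val = k)) := by
    ext i; simp
  rw [this, Set.ncard_coe_finset]
  exact card_fin_filter m (fun t => F t = k)


theorem buildSigma {m n l : ℕ} (hm : 0 < m) (hn : 0 < n) (hl : 0 < l)
    (F G : ℕ → ℕ)
    (hFb : ∀ i < m, F i ≤ 2*n-2) (hGb : ∀ q < l, G q ≤ 2*n-2)
    (hFmono : ∀ a b, a ≤ b → b < m → F a ≤ F b)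
    (hGmono : ∀ a b, a ≤ b → b < l → G a ≤ G b)
    (hGstep : ∀ q, q+1 < l → (max (G q) (G (q+1)) + 1)/2 ≤ min (G q) (G (q+1))/2 + 1)
    (hFev : ∀ j < n, ∃ i < m, F i = 2*j) (hGev : ∀ j < n, ∃ q < l, G q = 2*j)
    (hcnt : ∀ k < 2*n-1, ((Finset.range m).filter (fun i => F i = k)).card ≤
      ((Finset.range l).filter (fun q => G q = k)).card) :
    ∃ σ : ℕ → ℕ,
      (∀ q < l, σ q ≤ 2*m-2) ∧
      (∀ a b, a ≤ b → b < l → σ a ≤ σ b) ∧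
      (∀ q, q+1 < l → (max (σ q) (σ (q+1)) + 1)/2 ≤ min (σ q) (σ (q+1))/2 + 1) ∧
      (∀ i < m, ∃ q < l, σ q = 2*i) ∧
      (∀ q < l, ∀ j < n, (G q ≤ 2*j+1 ∧ 2*j ≤ G q + 1) ↔
        ∃ i < m, (2*i ≤ σ q + 1 ∧ σ q ≤ 2*i+1) ∧ (F i ≤ 2*j+1 ∧ 2*j ≤ F i + 1)) := by
  classical
  set PB : ℕ → Finset ℕ := fun k => (Finset.range m).filter (fun i => F i = k) with hPB
  set QB : ℕ → Finset ℕ := fun k => (Finset.range l).filter (fun q => G q = k) with hQB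
  have hPBmem : ∀ k i, i ∈ PB k ↔ i < m ∧ F i = k := by
    intro k i; rw [hPB]; simp
  have hQBmem : ∀ k q, q ∈ QB k ↔ q < l ∧ G q = k := by
    intro k q; rw [hQB]; simp
  set pLo : ℕ → ℕ := fun k => if h : (PB k).Nonempty then (PB k).min' h else 0 with hpLo
  set pHi : ℕ → ℕ := fun k => if h : (PB k).Nonempty then (PB k).max' h else 0 with hpHi
  set qLo : ℕ → ℕ := fun k => if h : (QB k).Nonempty then (QB k).min' h else 0 with hqLo
  set qHi : ℕ → ℕ := fun k => if h : (QB k).Nonempty then (QB k).max' h else 0 with hqHi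
  have hpLomem : ∀ k (h : (PB k).Nonempty), pLo k ∈ PB k := by
    intro k h; rw [hpLo]; simp only [h, dif_pos]; exact Finset.min'_mem _ _
  have hpHimem : ∀ k (h : (PB k).Nonempty), pHi k ∈ PB k := by
    intro k h; rw [hpHi]; simp only [h, dif_pos]; exact Finset.max'_mem _ _
  have hqLomem : ∀ k (h : (QB k).Nonempty), qLo k ∈ QB k := by
    intro k h; rw [hqLo]; simp only [h, dif_pos]; exact Finset.min'_mem _ _
  have hqHimem : ∀ k (h : (QB k).Nonempty), qHi k ∈ QB k := by
    intro k h; rw [hqHi]; simp only [h, dif_pos]; exact Finset.max'_mem _ _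
  have hpbnds : ∀ k (h : (PB k).Nonempty), ∀ x ∈ PB k, pLo k ≤ x ∧ x ≤ pHi k := by
    intro k h x hx
    constructor
    · rw [hpLo]; simp only [h, dif_pos]; exact Finset.min'_le _ _ hx
    · rw [hpHi]; simp only [h, dif_pos]; exact Finset.le_max' _ _ hx
  have hqbnds : ∀ k (h : (QB k).Nonempty), ∀ x ∈ QB k, qLo k ≤ x ∧ x ≤ qHi k := by
    intro k h x hx
    constructor
    · rw [hqLo]; simp only [h, dif_pos]; exact Finset.min'_le _ _ hx
    · rw [hqHi]; simp only [h, dif_pos]; exact Finset.le_max' _ _ hx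
  have hPIcc : ∀ k (h : (PB k).Nonempty), ∀ x, x ∈ PB k ↔ pLo k ≤ x ∧ x ≤ pHi k := by
    intro k h x
    constructor
    · exact hpbnds k h x
    · rintro ⟨h1, h2⟩
      have hlo := (hPBmem k _).mp (hpLomem k h)
      have hhi := (hPBmem k _).mp (hpHimem k h)
      rw [hPBmem]
      have hxm : x < m := by omega
      have ha := hFmono (pLo k) x h1 hxm
      have hb := hFmono x (pHi k) h2 hhi.1
      omega
  have hQIcc : ∀ k (h : (QB k).Nonempty), ∀ x, x ∈ QB k ↔ qLo k ≤ x ∧ x ≤ qHi k := by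
    intro k h x
    constructor
    · exact hqbnds k h x
    · rintro ⟨h1, h2⟩
      have hlo := (hQBmem k _).mp (hqLomem k h)
      have hhi := (hQBmem k _).mp (hqHimem k h)
      rw [hQBmem]
      have hxm : x < l := by omega
      have ha := hGmono (qLo k) x h1 hxm
      have hb := hGmono x (qHi k) h2 hhi.1
      omega
  have hord : ∀ k k', k < k' → (PB k).Nonempty → (PB k').Nonempty → pHi k < pLo k' := by
    intro k k' hkk h h'
    by_contra hcon
    push_neg at hcon
    have hhi := (hPBmem k _).mp (hpHimem k h)
    have hlo := (hPBmem k' _).mp (hpLomem k' h')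
    have := hFmono (pLo k') (pHi k) hcon hhi.1
    omega
  have hsucc : ∀ k k', k < k' → (PB k).Nonempty → (PB k').Nonempty →
      (∀ t, k < t → t < k' → PB t = ∅) → pLo k' = pHi k + 1 ∧ F (pHi k + 1) = k' := by
    intro k k' hkk h h' hgap
    have hordr := hord k k' hkk h h'
    have hhi := (hPBmem k _).mp (hpHimem k h)
    have hlo := (hPBmem k' _).mp (hpLomem k' h')
    set i := pHi k + 1 with hi
    have him : i < m := by omega
    have hFi1 : k ≤ F i := by
      have := hFmono (pHi k) i (by omega) him
      omega
    have hFine : F i ≠ k := by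
      intro hcon
      have : i ∈ PB k := (hPBmem k i).mpr ⟨him, hcon⟩
      have := (hpbnds k h i this).2
      omega
    have hFile : F i ≤ k' := by
      by_contra hcon
      push_neg at hcon
      have := hFmono i (pLo k') hordr hlo.1
      omega
    have hFieq : F i = k' := by
      rcases Nat.lt_or_ge (F i) k' with hc | hc
      · exfalso
        have : i ∈ PB (F i) := (hPBmem _ i).mpr ⟨him, rfl⟩
        rw [hgap (F i) (by omega) hc] at this
        simp at this
      · omega
    have : i ∈ PB k' := (hPBmem _ i).mpr ⟨him, hFieq⟩
    have := (hpbnds k' h' i this).1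
    constructor
    · omega
    · exact hFieq
  have hPBeven : ∀ k, k ≤ 2*n-2 → k % 2 = 0 → (PB k).Nonempty := by
    intro k hk hpar
    obtain ⟨i, him, hi⟩ := hFev (k/2) (by omega)
    exact ⟨i, (hPBmem _ i).mpr ⟨him, by omega⟩⟩
  have hQBne : ∀ k, (PB k).Nonempty → (QB k).Nonempty := by
    intro k h
    obtain ⟨i, hi⟩ := h
    have := (hPBmem k i).mp hi
    have hkb : k ≤ 2*n-2 := by
      have := hFb i this.1; omega
    have hc : (PB k).card ≤ (QB k).card := hcnt k (by omega)
    rw [Finset.nonempty_iff_ne_empty]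
    intro hcon
    rw [hcon] at hc
    simp only [Finset.card_empty, Nat.le_zero, Finset.card_eq_zero] at hc
    rw [hc] at hi
    simp at hi
  have hcards : ∀ k, (PB k).Nonempty → pHi k - pLo k ≤ qHi k - qLo k := by
    intro k h
    have hq := hQBne k h
    obtain ⟨i, hi⟩ := h
    have hkb : k ≤ 2*n-2 := by
      have h2 := (hPBmem k i).mp hi
      have := hFb i h2.1; omega
    have hPcard : (PB k).card = pHi k - pLo k + 1 := by
      have hIcc : PB k = Finset.Icc (pLo k) (pHi k) := by
        ext x; rw [hPIcc k ⟨i, hi⟩ x, Finset.mem_Icc]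
      rw [hIcc, Nat.card_Icc]
      have := (hpbnds k ⟨i, hi⟩ (pLo k) (hpLomem k ⟨i, hi⟩)).2
      omega
    have hQcard : (QB k).card = qHi k - qLo k + 1 := by
      have hIcc : QB k = Finset.Icc (qLo k) (qHi k) := by
        ext x; rw [hQIcc k hq x, Finset.mem_Icc]
      rw [hIcc, Nat.card_Icc]
      have := (hqbnds k hq (qLo k) (hqLomem k hq)).2
      omega
    have hc : (PB k).card ≤ (QB k).card := hcnt k (by omega)
    rw [hPcard, hQcard] at hc
    omega
  -- the definition of σ
  set σ : ℕ → ℕ := fun q =>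
    if (PB (G q)).Nonempty then 2 * min (pLo (G q) + (q - qLo (G q))) (pHi (G q))
    else 2 * pHi (G q - 1) + 1 with hσ
  -- main case analysis for σ q
  have hoddk : ∀ q < l, ¬ (PB (G q)).Nonempty → G q % 2 = 1 ∧ 1 ≤ G q := by
    intro q hq hne
    have hb := hGb q hq
    rcases Nat.mod_two_eq_zero_or_one (G q) with h | h
    · exact absurd (hPBeven (G q) hb h) hne
    · constructor
      · exact h
      · omega
  have hmain : ∀ q < l, (∃ i0, σ q = 2*i0 ∧ i0 < m ∧ F i0 = G q) ∨
      (∃ a, σ q = 2*a+1 ∧ a+1 < m ∧ F a = G q - 1 ∧ F (a+1) = G q + 1 ∧ G q % 2 = 1) := by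
    intro q hq
    by_cases hne : (PB (G q)).Nonempty
    · left
      set i0 := min (pLo (G q) + (q - qLo (G q))) (pHi (G q)) with hi0
      have hσq : σ q = 2 * i0 := by simp only [hσ]; rw [if_pos hne]
      have hlo := (hPBmem _ _).mp (hpLomem _ hne)
      have hhi := (hPBmem _ _).mp (hpHimem _ hne)
      have hbnd := hpbnds _ hne _ (hpLomem _ hne)
      have hi0mem : i0 ∈ PB (G q) := by
        rw [hPIcc _ hne]
        omega
      have := (hPBmem _ _).mp hi0mem
      exact ⟨i0, hσq, this.1, this.2⟩
    · right
      obtain ⟨hpar, hpos⟩ := hoddk q hq hne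
      have hb := hGb q hq
      set k := G q with hk
      have h1 : (PB (k-1)).Nonempty := hPBeven (k-1) (by omega) (by omega)
      have h2 : (PB (k+1)).Nonempty := hPBeven (k+1) (by omega) (by omega)
      have hgap : ∀ t, k - 1 < t → t < k + 1 → PB t = ∅ := by
        intro t ht1 ht2
        have : t = k := by omega
        rw [this]
        rw [Finset.not_nonempty_iff_eq_empty] at hne
        exact hne
      obtain ⟨hsucc1, hsucc2⟩ := hsucc (k-1) (k+1) (by omega) h1 h2 hgap
      have hσq : σ q = 2 * pHi (k-1) + 1 := by
        simp only [hσ]; rw [← hk, if_neg hne]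
      have hhi := (hPBmem _ _).mp (hpHimem _ h1)
      have hlo := (hPBmem _ _).mp (hpLomem _ h2)
      refine ⟨pHi (k-1), hσq, by omega, by omega, by rw [hsucc2], hpar⟩
  -- σ bound
  have hsbound : ∀ q < l, σ q ≤ 2*m-2 := by
    intro q hq
    rcases hmain q hq with ⟨i0, he, him, -⟩ | ⟨a, he, ham, -⟩
    · omega
    · omega
  -- σ evens
  have hsev : ∀ i < m, ∃ q < l, σ q = 2*i := by
    intro i him
    set k := F i with hk
    have hiPB : i ∈ PB k := (hPBmem _ i).mpr ⟨him, rfl⟩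
    have hne : (PB k).Nonempty := ⟨i, hiPB⟩
    have hQne := hQBne k hne
    have hcard := hcards k hne
    have hqlo := (hQBmem _ _).mp (hqLomem _ hQne)
    have hqbd := hqbnds _ hQne _ (hqLomem _ hQne)
    have hpbd := hpbnds _ hne _ hiPB
    set q := qLo k + (i - pLo k) with hq
    have hqmem : q ∈ QB k := by
      rw [hQIcc _ hQne]
      omega
    have hqq := (hQBmem _ _).mp hqmem
    refine ⟨q, hqq.1, ?_⟩
    have hσq : σ q = 2 * min (pLo k + (q - qLo k)) (pHi k) := by
      simp only [hσ, hqq.2]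
      rw [if_pos hne]
    rw [hσq]
    have : pLo k + (q - qLo k) = i := by omega
    rw [this]
    omega
  -- adjacent step
  have hadjstep : ∀ q, q + 1 < l → σ q ≤ σ (q+1) ∧
      (max (σ q) (σ (q+1)) + 1)/2 ≤ min (σ q) (σ (q+1))/2 + 1 := by
    intro q hq1
    have hq : q < l := by omega
    have hGle : G q ≤ G (q+1) := hGmono q (q+1) (by omega) hq1
    have hGstep' := hGstep q hq1
    rcases Nat.eq_or_lt_of_le hGle with heq | hlt
    · -- same block
      by_cases hne : (PB (G q)).Nonempty
      · have hne' : (PB (G (q+1))).Nonempty := by rw [← heq]; exact hne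
        have hσq : σ q = 2 * min (pLo (G q) + (q - qLo (G q))) (pHi (G q)) := by
          simp only [hσ]; rw [if_pos hne]
        have hσq1 : σ (q+1) = 2 * min (pLo (G q) + (q + 1 - qLo (G q))) (pHi (G q)) := by
          simp only [hσ, ← heq]; rw [if_pos hne]
        rw [hσq, hσq1]
        constructor
        · have : min (pLo (G q) + (q - qLo (G q))) (pHi (G q)) ≤
              min (pLo (G q) + (q + 1 - qLo (G q))) (pHi (G q)) := by omega
          omega
        · omega
      · have hne' : ¬ (PB (G (q+1))).Nonempty := by rw [← heq]; exact hne
        have hσq : σ q = 2 * pHi (G q - 1) + 1 := by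
          simp only [hσ]; rw [if_neg hne]
        have hσq1 : σ (q+1) = 2 * pHi (G q - 1) + 1 := by
          simp only [hσ, ← heq]; rw [if_neg hne]
        rw [hσq, hσq1]
        omega
    · -- block change: q = qHi (G q), q+1 = qLo (G (q+1))
      set k := G q with hk
      set k' := G (q+1) with hk'
      have hqQB : q ∈ QB k := (hQBmem _ q).mpr ⟨hq, rfl⟩
      have hq1QB : q + 1 ∈ QB k' := (hQBmem _ _).mpr ⟨hq1, rfl⟩
      have hQne : (QB k).Nonempty := ⟨q, hqQB⟩
      have hQne' : (QB k').Nonempty := ⟨q+1, hq1QB⟩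
      have hqhi : q = qHi k := by
        have h1 := (hqbnds _ hQne _ hqQB).2
        rcases Nat.eq_or_lt_of_le h1 with h | h
        · exact h
        · exfalso
          have : q + 1 ∈ QB k := by
            rw [hQIcc _ hQne]
            have := (hqbnds _ hQne _ hqQB).1
            omega
          have := (hQBmem _ _).mp this
          omega
      have hqlo' : q + 1 = qLo k' := by
        have h1 := (hqbnds _ hQne' _ hq1QB).1
        rcases Nat.eq_or_lt_of_le h1 with h | h
        · exact h.symm
        · exfalso
          have : q ∈ QB k' := by
            rw [hQIcc _ hQne']
            have := (hqbnds _ hQne' _ hq1QB).2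
            omega
          have := (hQBmem _ _).mp this
          omega
      -- QB empty between k and k'
      have hQgap : ∀ t, k < t → t < k' → QB t = ∅ := by
        intro t ht1 ht2
        rw [← Finset.not_nonempty_iff_eq_empty]
        rintro ⟨q'', hq''⟩
        have h2 := (hQBmem _ _).mp hq''
        rcases Nat.lt_or_ge q'' (q+1) with hc | hc
        · have := hGmono q'' q (by omega) hq
          omega
        · have := hGmono (q+1) q'' hc h2.1
          omega
      have hPgap : ∀ t, k < t → t < k' → PB t = ∅ := by
        intro t ht1 ht2
        have hkb := hGb (q+1) hq1
        have ht : t < 2*n-1 := by omega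
        have hc : (PB t).card ≤ (QB t).card := hcnt t ht
        rw [hQgap t ht1 ht2] at hc
        simp only [Finset.card_empty, Nat.le_zero, Finset.card_eq_zero] at hc
        exact hc
      by_cases hne : (PB k).Nonempty
      · have hcard := hcards k hne
        have hσq : σ q = 2 * pHi k := by
          simp only [hσ]
          rw [← hk, if_pos hne]
          congr 1
          have h1 := (hqbnds _ hQne _ (hqLomem _ hQne)).2
          have h2 := (hpbnds _ hne _ (hpLomem _ hne)).2
          omega
        by_cases hne' : (PB k').Nonempty
        · have hσq1 : σ (q+1) = 2 * pLo k' := by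
            simp only [hσ]
            rw [← hk', if_pos hne']
            have hb1 := (hpbnds _ hne' _ (hpLomem _ hne')).2
            have hb2 := hqlo'
            congr 1
            omega
          have := (hsucc k k' hlt hne hne' hPgap).1
          rw [hσq, hσq1, this]
          omega
        · -- PB k' empty: k' odd, and k' = k+1
          have hpar' : k' % 2 = 1 ∧ 1 ≤ k' := hoddk (q+1) hq1 hne'
          have hkk' : k' = k + 1 := by
            by_contra hcon
            have hk2 : k + 1 < k' := by omega
            have := hPBeven (k' - 1) (by have := hGb (q+1) hq1; omega) (by omega)
            rw [hPgap (k'-1) (by omega) (by omega)] at this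
            simp at this
          have hσq1 : σ (q+1) = 2 * pHi k + 1 := by
            simp only [hσ]
            rw [← hk', if_neg hne']
            rw [show k' - 1 = k by omega]
          rw [hσq, hσq1]
          omega
      · -- PB k empty: k odd, k' = k+1 even
        have hpar := hoddk q hq hne
        have hkk' : k' = k + 1 := by omega
        have hne' : (PB k').Nonempty := by
          apply hPBeven
          · exact hGb (q+1) hq1
          · omega
        have h1 : (PB (k-1)).Nonempty := hPBeven (k-1) (by have := hGb q hq; omega) (by omega)
        have hgap2 : ∀ t, k - 1 < t → t < k + 1 → PB t = ∅ := by
          intro t ht1 ht2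
          have : t = k := by omega
          rw [this, ← Finset.not_nonempty_iff_eq_empty]
          exact hne
        obtain ⟨hs1, hs2⟩ := hsucc (k-1) (k+1) (by omega) h1 (hkk' ▸ hne') hgap2
        have hσq : σ q = 2 * pHi (k-1) + 1 := by
          simp only [hσ]
          rw [← hk, if_neg hne]
        have hσq1 : σ (q+1) = 2 * pLo k' := by
          simp only [hσ]
          rw [← hk', if_pos hne']
          have hb1 := (hpbnds _ hne' _ (hpLomem _ hne')).2
          have hb2 := hqlo'
          congr 1
          omega
        rw [hσq, hσq1, hkk', hs1]
        omega
  -- monotone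
  have hsmono : ∀ a b, a ≤ b → b < l → σ a ≤ σ b := by
    have step : ∀ d a, a + d < l → σ a ≤ σ (a + d) := by
      intro d
      induction d with
      | zero => intro a _; simp
      | succ c ih =>
        intro a ha
        have h1 := ih a (by omega)
        have h2 := (hadjstep (a + c) (by omega)).1
        calc σ a ≤ σ (a+c) := h1
          _ ≤ σ ((a+c)+1) := h2
          _ = σ (a + (c+1)) := by ring_nf
    intro a b hab hbm
    have := step (b - a) a (by omega)
    rw [show a + (b - a) = b by omega] at this
    exact this
  -- composition
  have hcomp : ∀ q < l, ∀ j < n, (G q ≤ 2*j+1 ∧ 2*j ≤ G q + 1) ↔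
      ∃ i < m, (2*i ≤ σ q + 1 ∧ σ q ≤ 2*i+1) ∧ (F i ≤ 2*j+1 ∧ 2*j ≤ F i + 1) := by
    intro q hq j hj
    rcases hmain q hq with ⟨i0, he, him, hFi0⟩ | ⟨a, he, ham, hFa, hFa1, hpar⟩
    · constructor
      · rintro ⟨h1, h2⟩
        exact ⟨i0, him, by omega, by omega⟩
      · rintro ⟨i, him', ⟨hd1, hd2⟩, hF1, hF2⟩
        have : i = i0 := by omega
        subst this
        omega
    · have hGq1 : 1 ≤ G q := by omega
      constructor
      · rintro ⟨h1, h2⟩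
        by_cases hcase : 2*j ≤ G q
        · exact ⟨a, by omega, by omega, by omega⟩
        · exact ⟨a + 1, by omega, by omega, by omega⟩
      · rintro ⟨i, him', ⟨hd1, hd2⟩, hF1, hF2⟩
        have : i = a ∨ i = a + 1 := by omega
        rcases this with h | h <;> subst h <;> omega
  exact ⟨σ, hsbound, hsmono, fun q hq => (hadjstep q hq).2, hsev, hcomp⟩


theorem stmt_17 {P Q R : Type*}
    [Finite P] [Nonempty P] [Finite Q] [Nonempty Q] [Finite R] [Nonempty R]
    (sqP : P → P → Prop) (sqQ : Q → Q → Prop) (sqR : R → R → Prop)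
    (hPr : ∀ p, sqP p p) (hPs : ∀ a b, sqP a b → sqP b a)
    (hQr : ∀ q, sqQ q q) (hQs : ∀ a b, sqQ a b → sqQ b a)
    (hRr : ∀ r, sqR r r) (hRs : ∀ a b, sqR a b → sqR b a)
    (hP : IsPathGraph sqP) (hQ : IsPathGraph sqQ) (hR : IsPathGraph sqR)
    (A : R → P → Prop)
    (hAep : EdgePreserving sqP sqR A) (hAco : CoSurjective A) (hAci : CoInjective A)
    (hAmono : RelMonotone sqP sqR A)
    (B : R → Q → Prop)
    (hBep : EdgePreserving sqQ sqR B) (hBco : CoSurjective B) (hBci : CoInjective B)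
    (hBmono : RelMonotone sqQ sqR B) :
    (∀ C : Set R, IsCliqueSet sqR C →
        {p | {r | A r p} = C}.ncard ≤ {q | {r | B r q} = C}.ncard) ↔
      ∃ D : P → Q → Prop,
        EdgePreserving sqQ sqP D ∧ CoSurjective D ∧ CoInjective D ∧
        RelMonotone sqQ sqP D ∧ ∀ r q, B r q ↔ RelComp A D r q := by
  classical
  constructor
  · -- hard direction
    intro hyp
    obtain ⟨n, hnn⟩ : ∃ k, k = Nat.card R := ⟨_, rfl⟩
    obtain ⟨m, hmm⟩ : ∃ k, k = Nat.card P := ⟨_, rfl⟩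
    obtain ⟨l, hll⟩ : ∃ k, k = Nat.card Q := ⟨_, rfl⟩
    obtain ⟨eR, hadjR⟩ := pathEnumAux n sqR hRr hRs hR hnn.symm
    obtain ⟨eP0, hadjP0⟩ := pathEnumAux m sqP hPr hPs hP hmm.symm
    obtain ⟨eQ0, hadjQ0⟩ := pathEnumAux l sqQ hQr hQs hQ hll.symm
    have hnpos : 0 < n := by rw [hnn]; exact Nat.card_pos
    have hmpos : 0 < m := by rw [hmm]; exact Nat.card_pos
    have hlpos : 0 < l := by rw [hll]; exact Nat.card_pos
    obtain ⟨eP, hadjP, F, hreprA, hFb, hFstep, hFev, hFmono⟩ :=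
      exists_repr_mono sqR sqP hnpos hmpos eR eP0 hadjR hadjP0 hRs A hAep hAco hAci hAmono
    obtain ⟨eQ, hadjQ, G, hreprB, hGb, hGstep, hGev, hGmono⟩ :=
      exists_repr_mono sqR sqQ hnpos hlpos eR eQ0 hadjR hadjQ0 hRs B hBep hBco hBci hBmono
    -- counting
    have hcnt : ∀ k < 2*n-1, ((Finset.range m).filter (fun i => F i = k)).card ≤
        ((Finset.range l).filter (fun q => G q = k)).card := by
      intro k hk
      have h1 := ncard_fiber_eq hnpos eR eP A F hreprA hFb k hk
      have h2 := ncard_fiber_eq hnpos eR eQ B G hreprB hGb k hk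
      have hclq : IsCliqueSet sqR
          {r | ∃ j : Fin n, r = eR j ∧ k ≤ 2*j.val+1 ∧ 2*j.val ≤ k+1} := by
        constructor
        · exact ⟨eR ⟨k/2, by omega⟩, ⟨k/2, by omega⟩, rfl, by simp; omega⟩
        · rintro a ⟨j, rfl, hj1, hj2⟩ b ⟨j', rfl, hj1', hj2'⟩
          rw [hadjR]
          omega
      have := hyp _ hclq
      rw [h1, h2] at this
      exact this
    obtain ⟨σ, hsb, hsm, hss, hse, hsc⟩ := buildSigma hmpos hnpos hlpos F G hFb hGb
      hFmono hGmono hGstep hFev hGev hcnt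
    -- build D
    set D : P → Q → Prop := fun p q =>
      2 * (eP.symm p).val ≤ σ (eQ.symm q).val + 1 ∧
        σ (eQ.symm q).val ≤ 2 * (eP.symm p).val + 1 with hD
    have hDval : ∀ (i : Fin m) (x : Fin l), D (eP i) (eQ x) ↔
        (2 * i.val ≤ σ x.val + 1 ∧ σ x.val ≤ 2 * i.val + 1) := by
      intro i x
      rw [hD]
      simp
    refine ⟨D, ?_, ?_, ?_, ?_, ?_⟩
    · -- EdgePreserving
      intro p q q' p' h1 hqq' h2
      set a := eQ.symm q with ha
      set b := eQ.symm q' with hb2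
      have hab : a.val ≤ b.val + 1 ∧ b.val ≤ a.val + 1 := by
        rw [← hadjQ a b]
        have : eQ a = q := by rw [ha]; simp
        have h2' : eQ b = q' := by rw [hb2]; simp
        rw [this, h2']
        exact hqq'
      obtain ⟨hd1, hd2⟩ : 2 * (eP.symm p).val ≤ σ a.val + 1 ∧
          σ a.val ≤ 2 * (eP.symm p).val + 1 := h1
      obtain ⟨hd3, hd4⟩ : 2 * (eP.symm p').val ≤ σ b.val + 1 ∧
          σ b.val ≤ 2 * (eP.symm p').val + 1 := h2
      have goal : (eP.symm p).val ≤ (eP.symm p').val + 1 ∧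
          (eP.symm p').val ≤ (eP.symm p).val + 1 := by
        rcases Nat.lt_trichotomy a.val b.val with hc | hc | hc
        · have hbl : b.val < l := b.isLt
          have hstep := hss a.val (by omega)
          have : a.val + 1 = b.val := by omega
          rw [this] at hstep
          omega
        · rw [← hc] at hd3 hd4
          omega
        · have hal : a.val < l := a.isLt
          have hstep := hss b.val (by omega)
          have : b.val + 1 = a.val := by omega
          rw [this] at hstep
          omega
      have : sqP (eP (eP.symm p)) (eP (eP.symm p')) := (hadjP _ _).mpr goal
      simpa using this
    · -- CoSurjective
      intro q
      have hbq := hsb (eQ.symm q).val (eQ.symm q).isLt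
      refine ⟨eP ⟨σ (eQ.symm q).val / 2, by omega⟩, ?_, ?_⟩
      · show 2 * (eP.symm (eP ⟨σ (eQ.symm q).val / 2, by omega⟩)).val ≤ σ (eQ.symm q).val + 1
        simp
        omega
      · show σ (eQ.symm q).val ≤ 2 * (eP.symm (eP ⟨σ (eQ.symm q).val / 2, by omega⟩)).val + 1
        simp
        omega
    · -- CoInjective
      intro p
      obtain ⟨q0, hq0l, hq0⟩ := hse (eP.symm p).val (eP.symm p).isLt
      refine ⟨eQ ⟨q0, hq0l⟩, ?_⟩
      ext p'
      simp only [Set.mem_setOf_eq, Set.mem_singleton_iff, hD]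
      have : (eQ.symm (eQ ⟨q0, hq0l⟩)).val = q0 := by simp
      rw [this, hq0]
      constructor
      · rintro ⟨hx1, hx2⟩
        have : (eP.symm p').val = (eP.symm p).val := by omega
        have h3 : eP.symm p' = eP.symm p := Fin.ext this
        have := congrArg eP h3
        simpa using this
      · rintro rfl
        omega
    · -- RelMonotone
      intro C hC
      have hCint := interval_of_conn eP sqP hadjP C hC
      apply conn_of_interval eQ sqQ hadjQ hQs
      intro x y z hxy hyz hx hz
      obtain ⟨pa, hpaC, hDa⟩ := hx
      obtain ⟨pc, hpcC, hDc⟩ := hz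
      set ia := (eP.symm pa).val with hia
      set ic := (eP.symm pc).val with hic
      have hda : 2 * ia ≤ σ (eQ.symm (eQ x)).val + 1 ∧
          σ (eQ.symm (eQ x)).val ≤ 2 * ia + 1 := hDa
      have hdc : 2 * ic ≤ σ (eQ.symm (eQ z)).val + 1 ∧
          σ (eQ.symm (eQ z)).val ≤ 2 * ic + 1 := hDc
      rw [show (eQ.symm (eQ x)) = x by simp] at hda
      rw [show (eQ.symm (eQ z)) = z by simp] at hdc
      have hσ1 : σ x.val ≤ σ y.val := hsm x.val y.val hxy y.isLt
      have hσ2 : σ y.val ≤ σ z.val := hsm y.val z.val hyz z.isLt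
      have hicm : ic < m := (eP.symm pc).isLt
      have hiam : ia < m := (eP.symm pa).isLt
      obtain ⟨t, htm, ht1, ht2, ht3, ht4⟩ : ∃ t, t < m ∧ min ia ic ≤ t ∧ t ≤ max ia ic ∧
          2*t ≤ σ y.val + 1 ∧ σ y.val ≤ 2*t + 1 := by
        rcases Nat.mod_two_eq_zero_or_one (σ y.val) with hpar | hpar
        · exact ⟨σ y.val / 2, by omega, by omega, by omega, by omega, by omega⟩
        · by_cases hc1 : ia ≤ ic
          · by_cases hc2 : (σ y.val + 1)/2 ≤ ic
            · exact ⟨(σ y.val + 1)/2, by omega, by omega, by omega, by omega, by omega⟩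
            · exact ⟨(σ y.val - 1)/2, by omega, by omega, by omega, by omega, by omega⟩
          · exact ⟨(σ y.val + 1)/2, by omega, by omega, by omega, by omega, by omega⟩
      have hptC : eP ⟨t, htm⟩ ∈ C := by
        rcases le_or_gt ia ic with hcase | hcase
        · have := hCint (eP.symm pa) ⟨t, htm⟩ (eP.symm pc)
            (by rw [Fin.le_def]; simp; omega) (by rw [Fin.le_def]; simp; omega)
            (by simpa using hpaC) (by simpa using hpcC)
          exact this
        · have := hCint (eP.symm pc) ⟨t, htm⟩ (eP.symm pa)
            (by rw [Fin.le_def]; simp; omega) (by rw [Fin.le_def]; simp; omega)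
            (by simpa using hpcC) (by simpa using hpaC)
          exact this
      refine ⟨eP ⟨t, htm⟩, hptC, ?_⟩
      rw [hDval]
      exact ⟨ht3, ht4⟩
    · -- composition
      intro r q
      set j := eR.symm r with hj
      set x := eQ.symm q with hx
      have hrq : B r q ↔ (G x.val ≤ 2*j.val+1 ∧ 2*j.val ≤ G x.val + 1) := by
        rw [show r = eR j by rw [hj]; simp, show q = eQ x by rw [hx]; simp]
        exact hreprB j x
      rw [hrq]
      rw [hsc x.val x.isLt j.val j.isLt]
      constructor
      · rintro ⟨i, him, ⟨hs1, hs2⟩, hF1, hF2⟩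
        refine ⟨eP ⟨i, him⟩, ?_, ?_⟩
        · rw [show r = eR j by rw [hj]; simp]
          rw [hreprA j ⟨i, him⟩]
          exact ⟨hF1, hF2⟩
        · rw [show q = eQ x by rw [hx]; simp, hDval]
          exact ⟨hs1, hs2⟩
      · rintro ⟨p, hA, hDpq⟩
        refine ⟨(eP.symm p).val, (eP.symm p).isLt, ?_, ?_⟩
        · rw [show q = eQ x by rw [hx]; simp] at hDpq
          have := (hDval (eP.symm p) x).mp (by simpa using hDpq)
          exact this
        · rw [show r = eR j by rw [hj]; simp, show p = eP (eP.symm p) by simp] at hA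
          exact (hreprA j (eP.symm p)).mp hA
  · -- easy direction
    rintro ⟨D, hDep, hDco, hDci, hDmono, hDcomp⟩ C hC
    choose g hg using hDci
    have hmaps : ∀ p ∈ {p | {r | A r p} = C}, g p ∈ {q | {r | B r q} = C} := by
      intro p hp
      show {r | B r (g p)} = C
      have : ∀ r, B r (g p) ↔ A r p := by
        intro r
        rw [hDcomp]
        constructor
        · rintro ⟨p', hA, hD⟩
          have : p' ∈ {p' | D p' (g p)} := hD
          rw [hg p] at this
          rw [Set.mem_singleton_iff] at this
          rw [← this]
          exact hA
        · intro hA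
          refine ⟨p, hA, ?_⟩
          have : p ∈ ({p} : Set P) := rfl
          rw [← hg p] at this
          exact this
      rw [show {r | B r (g p)} = {r | A r p} by ext r; exact this r]
      exact hp
    have hinj : Set.InjOn g {p | {r | A r p} = C} := by
      intro p1 h1 p2 h2 heq
      have e1 := hg p1
      have e2 := hg p2
      rw [heq] at e1
      rw [e2] at e1
      exact (Set.singleton_eq_singleton_iff.mp e1).symm
    exact Set.ncard_le_ncard_of_injOn g hmaps hinj (Set.toFinite _)
end

section
/- Let (G_n)_{n∈ω} be nonempty finite sets and for m ≤ n let ⊐^m_n ⊆ G_m × G_n be relations such that each ⊐^n_n is the identity, ⊐^l_m ∘ ⊐^m_n = ⊐^l_n for l ≤ m ≤ n, and each ⊐^m_n is surjective and co-surjective. Let P be the induced poset: the disjoint union of the G_n, with (p, n) ≤ (q, m) iff m ≤ n and q ⊐^m_n p. Then for every minimal selector S of P there is a thread (s_n) ∈ ∏_n G_n, i.e. s_m ⊐^m_n s_n for all m ≤ n, such that S equals the upward closure {x ∈ P : ∃n, s_n ≤ x}. -/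
def ple {G : ℕ → Type*} (R : ∀ m n : ℕ, G m → G n → Prop)
    (x y : Σ n, G n) : Prop :=
  y.1 ≤ x.1 ∧ R y.1 x.1 y.2 x.2

def IsBand {G : ℕ → Type*} (R : ∀ m n : ℕ, G m → G n → Prop)
    (B : Set (Σ n, G n)) : Prop :=
  B.Finite ∧ ∀ p : Σ n, G n, (∃ b ∈ B, ple R b p) ∨ (∃ b ∈ B, ple R p b)

def IsCap {G : ℕ → Type*} (R : ∀ m n : ℕ, G m → G n → Prop)
    (C : Set (Σ n, G n)) : Prop :=
  ∃ B, IsBand R B ∧ ∀ b ∈ B, ∃ c ∈ C, ple R b c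

def IsSelector {G : ℕ → Type*} (R : ∀ m n : ℕ, G m → G n → Prop)
    (S : Set (Σ n, G n)) : Prop :=
  ∀ C, IsCap R C → (S ∩ C).Nonempty

def IsMinSelector {G : ℕ → Type*} (R : ∀ m n : ℕ, G m → G n → Prop)
    (S : Set (Σ n, G n)) : Prop :=
  IsSelector R S ∧ ∀ S' ⊆ S, IsSelector R S' → S' = S

theorem aux_pigeon_19 {α : Type*} [Finite α] (E : ℕ → Set α) (hne : ∀ M, (E M).Nonempty)
    (hanti : ∀ M M', M ≤ M' → E M' ⊆ E M) : ∃ g, ∀ M, g ∈ E M := by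
  choose f hf using hne
  obtain ⟨g, hg⟩ := Finite.exists_infinite_fiber f
  rw [Set.infinite_coe_iff] at hg
  refine ⟨g, fun M => ?_⟩
  obtain ⟨M', hM', hgt⟩ := hg.exists_gt M
  have hfM : f M' = g := hM'
  exact hanti M M' hgt.le (hfM ▸ hf M')

theorem stmt_19 {G : ℕ → Type*} [∀ n, Finite (G n)] [∀ n, Nonempty (G n)]
    (R : ∀ m n : ℕ, G m → G n → Prop)
    (hid : ∀ n (x y : G n), R n n x y ↔ x = y)
    (hcomp : ∀ l m n : ℕ, l ≤ m → m ≤ n → ∀ (x : G l) (z : G n),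
      R l n x z ↔ ∃ y : G m, R l m x y ∧ R m n y z)
    (hsurj : ∀ m n : ℕ, m ≤ n → ∀ x : G m, ∃ y : G n, R m n x y)
    (hcosurj : ∀ m n : ℕ, m ≤ n → ∀ y : G n, ∃ x : G m, R m n x y)
    (S : Set (Σ n, G n)) (hS : IsMinSelector R S) :
    ∃ s : ∀ n, G n, (∀ m n : ℕ, m ≤ n → R m n (s m) (s n)) ∧
      S = {x | ∃ n : ℕ, ple R ⟨n, s n⟩ x} := by
  classical
  -- transitivity of ple
  have htrans : ∀ x y z : Σ n, G n, ple R x y → ple R y z → ple R x z := by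
    rintro x y z ⟨h1, r1⟩ ⟨h2, r2⟩
    exact ⟨h2.trans h1, (hcomp z.1 y.1 x.1 h2 h1 z.2 x.2).2 ⟨y.2, r2, r1⟩⟩
  -- the set of level-n points whose up-set is contained in S
  set A : ∀ n, Set (G n) := fun n => {g | ∀ c, ple R ⟨n, g⟩ c → c ∈ S} with hA
  have hA_ne : ∀ n, (A n).Nonempty := by
    intro n
    by_contra hem
    rw [Set.not_nonempty_iff_eq_empty] at hem
    have hall : ∀ g : G n, ∃ c, ple R ⟨n, g⟩ c ∧ c ∉ S := by
      intro g
      by_contra hg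
      push_neg at hg
      have : g ∈ A n := fun c hc => hg c hc
      simp [hem] at this
    have hcap : IsCap R Sᶜ := by
      refine ⟨Set.range (fun g : G n => (⟨n, g⟩ : Σ n, G n)), ⟨Set.finite_range _, ?_⟩, ?_⟩
      · intro p
        rcases le_total p.1 n with h | h
        · obtain ⟨y, hy⟩ := hsurj p.1 n h p.2
          exact Or.inl ⟨⟨n, y⟩, ⟨y, rfl⟩, h, hy⟩
        · obtain ⟨x, hx⟩ := hcosurj n p.1 h p.2
          exact Or.inr ⟨⟨n, x⟩, ⟨x, rfl⟩, h, hx⟩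
      · rintro b ⟨g, rfl⟩
        obtain ⟨c, hc, hcS⟩ := hall g
        exact ⟨c, hcS, hc⟩
    obtain ⟨x, hx1, hx2⟩ := hS.1 Sᶜ hcap
    exact hx2 hx1
  -- A is downward closed along R
  have hA_down : ∀ m n, m ≤ n → ∀ (y : G m) (g : G n), R m n y g → g ∈ A n → y ∈ A m := by
    intro m n hmn y g hr hg c hc
    obtain ⟨hc1, hc2⟩ := hc
    exact hg c ⟨hc1.trans hmn, (hcomp c.1 m n hc1 hmn c.2 g).2 ⟨y, hc2, hr⟩⟩
  -- the stable part
  set Astar : ∀ n, Set (G n) :=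
    fun n => {g | ∀ M, n ≤ M → ∃ g' ∈ A M, R n M g g'} with hAstar
  have hAstar_sub : ∀ n, Astar n ⊆ A n := by
    intro n g hg
    obtain ⟨g', hg', hr⟩ := hg n le_rfl
    rwa [(hid n g g').1 hr]
  have hAstar_ne : ∀ n, (Astar n).Nonempty := by
    intro n
    have := aux_pigeon_19 (α := G n)
      (fun M => {g | ∃ g' ∈ A (n + M), R n (n + M) g g'}) ?_ ?_
    · obtain ⟨g, hg⟩ := this
      refine ⟨g, fun M hM => ?_⟩
      have := hg (M - n)
      rwa [Nat.add_sub_cancel' hM] at this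
    · intro M
      obtain ⟨g', hg'⟩ := hA_ne (n + M)
      obtain ⟨g, hg⟩ := hcosurj n (n + M) (Nat.le_add_right n M) g'
      exact ⟨g, g', hg', hg⟩
    · rintro M M' hMM' g ⟨g', hg', hr⟩
      obtain ⟨y, hy1, hy2⟩ := (hcomp n (n + M) (n + M') (Nat.le_add_right n M)
        (Nat.add_le_add_left hMM' n) g g').1 hr
      exact ⟨y, hA_down (n + M) (n + M') (Nat.add_le_add_left hMM' n) y g' hy2 hg', hy1⟩
  -- one can always step forward inside Astar
  have hstep : ∀ n (g : G n), g ∈ Astar n → ∃ g' ∈ Astar (n + 1), R n (n + 1) g g' := by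
    intro n g hg
    have := aux_pigeon_19 (α := G (n + 1))
      (fun M => {g' | R n (n + 1) g g' ∧ ∃ h ∈ A (n + 1 + M), R (n + 1) (n + 1 + M) g' h}) ?_ ?_
    · obtain ⟨g', hg'⟩ := this
      refine ⟨g', fun M hM => ?_, (hg' 0).1⟩
      have := (hg' (M - (n + 1))).2
      rwa [Nat.add_sub_cancel' hM] at this
    · intro M
      obtain ⟨h, hh, hr⟩ := hg (n + 1 + M) (by omega)
      obtain ⟨y, hy1, hy2⟩ := (hcomp n (n + 1) (n + 1 + M) (Nat.le_succ n)
        (Nat.le_add_right _ M) g h).1 hr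
      exact ⟨y, hy1, h, hh, hy2⟩
    · rintro M M' hMM' g' ⟨hr, h, hh, hrh⟩
      refine ⟨hr, ?_⟩
      obtain ⟨y, hy1, hy2⟩ := (hcomp (n + 1) (n + 1 + M) (n + 1 + M')
        (Nat.le_add_right _ M) (by omega) g' h).1 hrh
      exact ⟨y, hA_down (n + 1 + M) (n + 1 + M') (by omega) y h hy2 hh, hy1⟩
  -- build the thread
  choose f hf1 hf2 using hstep
  let t : ∀ n, {g : G n // g ∈ Astar n} := fun n =>
    Nat.rec ⟨(hAstar_ne 0).choose, (hAstar_ne 0).choose_spec⟩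
      (fun n p => ⟨f n p.1 p.2, hf1 n p.1 p.2⟩) n
  have hadj : ∀ n, R n (n + 1) (t n).1 (t (n + 1)).1 := fun n => hf2 n (t n).1 (t n).2
  refine ⟨fun n => (t n).1, ?_, ?_⟩
  · -- thread property
    intro m n hmn
    induction n with
    | zero =>
      have : m = 0 := Nat.le_zero.mp hmn
      subst this
      exact (hid 0 _ _).2 rfl
    | succ n ih =>
      rcases Nat.lt_succ_iff_lt_or_eq.mp (Nat.lt_succ_of_le hmn) with h | h
      · have hm' : m ≤ n := by omega
        exact (hcomp m n (n + 1) hm' (Nat.le_succ n) _ _).2 ⟨(t n).1, ih hm', hadj n⟩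
      · subst h
        exact (hid _ _ _).2 rfl
  · -- S equals the up-closure of the thread
    set U : Set (Σ n, G n) := {x | ∃ n : ℕ, ple R ⟨n, (t n).1⟩ x} with hU
    have hUS : U ⊆ S := by
      rintro x ⟨n, hx⟩
      exact hAstar_sub n (t n).2 x hx
    have hUsel : IsSelector R U := by
      rintro C ⟨B, ⟨hBfin, hband⟩, href⟩
      obtain ⟨N0, hN0⟩ := (hBfin.image Sigma.fst).bddAbove
      set N := N0 + 1 with hN
      rcases hband ⟨N, (t N).1⟩ with ⟨b, hb, hple⟩ | ⟨b, hb, hple⟩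
      · exfalso
        have h1 : N ≤ b.1 := hple.1
        have h2 : b.1 ≤ N0 := hN0 ⟨b, hb, rfl⟩
        omega
      · obtain ⟨c, hc, hbc⟩ := href b hb
        exact ⟨c, ⟨N, htrans _ b c hple hbc⟩, hc⟩
    have := hS.2 U hUS hUsel
    exact this.symm
end
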